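/- arXiv:2510.13705 — 13 statements merged into one kernel-verified Lean document; each statement's English description precedes it below -/
import Mathlib

section
/- Let f : {0,1}^n → {0,1} be a non-zero Boolean function. Then VC(f) + deg(f) ≥ n, where VC(f) is the VC-dimension of the set family supp(f) ⊆ 2^[n] (identifying each x ∈ {0,1}^n with the set of coordinates where it equals 1) and deg(f) is the degree of the unique multilinear real polynomial representing f on {0,1}^n. -/
open Finset

/-- A family `F` shatters `T` if every subset of `T` is a trace `A ∩ T` for some `A ∈ F`. -/
def ShattersFam {α : Type*} [DecidableEq α] (F : Finset (Finset α)) (T : Finset α) : Prop :=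
  ∀ U ⊆ T, ∃ A ∈ F, A ∩ T = U

/-- The VC-dimension of a set family: the largest cardinality of a shattered set. -/
noncomputable def vcDimFam {α : Type*} [DecidableEq α] (F : Finset (Finset α)) : ℕ :=
  sSup {d | ∃ T : Finset α, T.card = d ∧ ShattersFam F T}

/-- Degree of a multilinear polynomial given by its coefficients `c S` (of the monomial `x^S`):
the largest `|S|` with `c S ≠ 0`. -/
noncomputable def polyDeg {α R : Type*} [Zero R] (c : Finset α → R) : ℕ :=
  sSup {d | ∃ S : Finset α, S.card = d ∧ c S ≠ 0}

section Aux
variable {α : Type*} [DecidableEq α]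

lemma neg_one_sum_real (s : Finset α) :
    (∑ X ∈ s.powerset, (-1 : ℝ) ^ X.card) = if s = ∅ then 1 else 0 := by
  have h := @Finset.sum_powerset_neg_one_pow_card α _ s
  have h2 : (∑ X ∈ s.powerset, (-1 : ℝ) ^ X.card) = ((∑ m ∈ s.powerset, (-1 : ℤ) ^ m.card : ℤ) : ℝ) := by
    push_cast; rfl
  rw [h2, h]
  split <;> simp

lemma inner_sum2 (S W' : Finset α) (hW' : W' ⊆ S) :
    (∑ W ∈ S.powerset.filter (fun W => W' ⊆ W), (-1 : ℝ) ^ (S \ W).card)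
      = if W' = S then 1 else 0 := by
  have hbij : (∑ W ∈ S.powerset.filter (fun W => W' ⊆ W), (-1 : ℝ) ^ (S \ W).card)
      = ∑ X ∈ (S \ W').powerset, (-1 : ℝ) ^ ((S \ W') \ X).card := by
    refine Finset.sum_bij' (fun W _ => W \ W') (fun X _ => W' ∪ X) ?_ ?_ ?_ ?_ ?_
    · intro W hW
      simp only [mem_filter, mem_powerset] at hW
      exact mem_powerset.2 (sdiff_subset_sdiff hW.1 le_rfl)
    · intro X hX
      simp only [mem_powerset] at hX
      refine mem_filter.2 ⟨mem_powerset.2 (union_subset hW' (hX.trans sdiff_subset)), subset_union_left⟩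
    · intro W hW
      simp only [mem_filter, mem_powerset] at hW
      exact union_sdiff_of_subset hW.2
    · intro X hX
      simp only [mem_powerset] at hX
      rw [union_sdiff_cancel_left (disjoint_of_subset_right hX disjoint_sdiff)]
    · intro W hW
      simp only [mem_filter, mem_powerset] at hW
      congr 1
      have : (S \ W') \ (W \ W') = S \ W := by
        ext a
        simp only [mem_sdiff, not_and, not_not]
        constructor
        · rintro ⟨⟨haS, haW'⟩, h2⟩
          exact ⟨haS, fun haW => haW' (h2 haW)⟩
        · rintro ⟨haS, haW⟩
          exact ⟨⟨haS, fun h => haW (hW.2 h)⟩, fun h => absurd h haW⟩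
      rw [this]
  rw [hbij]
  have key : ∀ X ∈ (S \ W').powerset,
      (-1:ℝ)^(((S \ W') \ X).card) = (-1:ℝ)^((S \ W').card) * (-1)^X.card := by
    intro X hX
    rw [mem_powerset] at hX
    rw [card_sdiff_of_subset hX]
    have hle := card_le_card hX
    have hexp : (S \ W').card + X.card = ((S \ W').card - X.card) + 2 * X.card := by omega
    calc (-1:ℝ)^((S \ W').card - X.card)
        = (-1:ℝ)^((S \ W').card - X.card) * ((-1:ℝ)^2)^X.card := by norm_num
      _ = (-1:ℝ)^(((S \ W').card - X.card) + 2 * X.card) := by rw [pow_add, pow_mul]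
      _ = (-1:ℝ)^((S \ W').card + X.card) := by rw [hexp]
      _ = _ := by rw [pow_add]
  rw [Finset.sum_congr rfl key, ← mul_sum, neg_one_sum_real]
  by_cases h : W' = S
  · subst h; simp
  · have hne : S \ W' ≠ ∅ := by
      rw [Ne, sdiff_eq_empty_iff_subset]
      intro hs; exact h (subset_antisymm hW' hs)
    rw [if_neg hne, if_neg h, mul_zero]

lemma moebius (S : Finset α) (h : Finset α → ℝ) :
    ∑ W ∈ S.powerset, (-1:ℝ)^((S \ W).card) * ∑ W' ∈ W.powerset, h W' = h S := by
  have swap : ∑ W ∈ S.powerset, ∑ W' ∈ W.powerset, (-1:ℝ)^((S \ W).card) * h W'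
      = ∑ W' ∈ S.powerset, ∑ W ∈ S.powerset.filter (fun W => W' ⊆ W),
          (-1:ℝ)^((S \ W).card) * h W' := by
    refine Finset.sum_comm' ?_
    intro W W'
    simp only [mem_powerset, mem_filter]
    constructor
    · rintro ⟨h1, h2⟩; exact ⟨⟨h1, h2⟩, h2.trans h1⟩
    · rintro ⟨⟨h1, h2⟩, h3⟩; exact ⟨h1, h2⟩
  simp_rw [mul_sum] at *
  rw [swap]
  have : ∀ W' ∈ S.powerset, (∑ W ∈ S.powerset.filter (fun W => W' ⊆ W),
      (-1:ℝ)^((S \ W).card) * h W') = (if W' = S then 1 else 0) * h W' := by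
    intro W' hW'
    rw [← sum_mul, inner_sum2 S W' (mem_powerset.1 hW')]
  rw [Finset.sum_congr rfl this]
  simp only [ite_mul, one_mul, zero_mul]
  rw [Finset.sum_ite_eq' S.powerset S h, if_pos (mem_powerset.2 le_rfl)]

lemma sum_powerset_union_disj (W U : Finset α) (hd : Disjoint W U) (c : Finset α → ℝ) :
    ∑ R ∈ (W ∪ U).powerset, c R = ∑ W' ∈ W.powerset, ∑ V ∈ U.powerset, c (W' ∪ V) := by
  rw [← Finset.sum_product']
  refine (Finset.sum_bij' (fun p _ => p.1 ∪ p.2) (fun R _ => (R ∩ W, R ∩ U)) ?_ ?_ ?_ ?_ ?_).symm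
  · rintro ⟨W', V⟩ hp
    simp only [mem_product, mem_powerset] at hp
    exact mem_powerset.2 (union_subset_union hp.1 hp.2)
  · intro R hR
    rw [mem_powerset] at hR
    simp only [mem_product, mem_powerset]
    exact ⟨inter_subset_right, inter_subset_right⟩
  · rintro ⟨W', V⟩ hp
    simp only [mem_product, mem_powerset] at hp
    have h1 : (W' ∪ V) ∩ W = W' := by
      ext a
      simp only [mem_inter, mem_union]
      constructor
      · rintro ⟨h | h, haW⟩
        · exact h
        · exact absurd haW (disjoint_right.1 hd (hp.2 h))
      · intro h; exact ⟨Or.inl h, hp.1 h⟩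
    have h2 : (W' ∪ V) ∩ U = V := by
      ext a
      simp only [mem_inter, mem_union]
      constructor
      · rintro ⟨h | h, haU⟩
        · exact absurd haU (disjoint_left.1 hd (hp.1 h))
        · exact h
      · intro h; exact ⟨Or.inr h, hp.2 h⟩
    simp [h1, h2]
  · intro R hR
    rw [mem_powerset] at hR
    simp only []
    rw [← inter_union_distrib_left, inter_eq_left.2 hR]
  · rintro ⟨W', V⟩ hp
    rfl

end Aux

/-- If `f : {0,1}^n → {0,1}` is non-zero and `c` are the coefficients of its
(unique) multilinear real polynomial representation (so `f(1_T) = Σ_{S ⊆ T} c S` for all `T`,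
since the monomial `x^S` evaluates to 1 at `1_T` iff `S ⊆ T`), then `VC(f) + deg(f) ≥ n`. -/

theorem stmt0 (n : ℕ) (f : Finset (Fin n) → Bool) (hf : ∃ x, f x = true)
    (c : Finset (Fin n) → ℝ)
    (hc : ∀ T : Finset (Fin n), (if f T then (1 : ℝ) else 0) = ∑ S ∈ T.powerset, c S) :
    n ≤ vcDimFam (Finset.univ.filter fun A => f A = true) + polyDeg c := by
  classical
  set D : Set ℕ := {d | ∃ S : Finset (Fin n), S.card = d ∧ c S ≠ 0} with hDdef
  have hpoly : polyDeg c = sSup D := rfl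
  have hDne : D.Nonempty := by
    obtain ⟨x, hx⟩ := hf
    have hex : ∃ S, c S ≠ 0 := by
      by_contra hall
      push_neg at hall
      have h1 := hc x
      rw [hx] at h1
      simp [hall] at h1
    obtain ⟨S, hS⟩ := hex
    exact ⟨S.card, S, rfl, hS⟩
  have hDbdd : BddAbove D := by
    refine ⟨n, ?_⟩
    rintro d ⟨S, rfl, -⟩
    simpa using card_le_univ S
  obtain ⟨S, hScard, hScne⟩ := Nat.sSup_mem hDne hDbdd
  have hpd : polyDeg c = S.card := by rw [hpoly, ← hScard]
  have hmax : ∀ R : Finset (Fin n), polyDeg c < R.card → c R = 0 := by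
    intro R hR
    by_contra h
    exact absurd (le_csSup hDbdd (⟨R, rfl, h⟩ : R.card ∈ D)) (not_le.2 (hpoly ▸ hR))
  have hshat : ShattersFam (Finset.univ.filter fun A => f A = true) Sᶜ := by
    intro U hU
    by_contra hno
    push_neg at hno
    have hdisj : ∀ W : Finset (Fin n), W ⊆ S → Disjoint W U := by
      intro W hW
      refine disjoint_left.2 fun a haW haU => ?_
      have := hU haU
      rw [mem_compl] at this
      exact this (hW haW)
    have hg : ∀ W ∈ S.powerset, ∑ R ∈ (W ∪ U).powerset, c R = 0 := by
      intro W hW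
      rw [mem_powerset] at hW
      have h1 := hc (W ∪ U)
      by_cases hfWU : f (W ∪ U) = true
      · exfalso
        refine hno (W ∪ U) (mem_filter.2 ⟨mem_univ _, hfWU⟩) ?_
        ext a
        simp only [mem_inter, mem_union, mem_compl]
        constructor
        · rintro ⟨h | h, haS⟩
          · exact absurd (hW h) haS
          · exact h
        · intro h
          exact ⟨Or.inr h, mem_compl.1 (hU h)⟩
      · rw [if_neg hfWU] at h1
        exact h1.symm
    have key := moebius S (fun W' => ∑ V ∈ U.powerset, c (W' ∪ V))
    have hzero : ∑ W ∈ S.powerset, (-1:ℝ)^((S \ W).card) *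
        ∑ W' ∈ W.powerset, (∑ V ∈ U.powerset, c (W' ∪ V)) = 0 := by
      refine Finset.sum_eq_zero fun W hW => ?_
      rw [← sum_powerset_union_disj W U (hdisj W (mem_powerset.1 hW)) c, hg W hW, mul_zero]
    have hS0 : ∑ V ∈ U.powerset, c (S ∪ V) = 0 := key.symm.trans hzero
    have hsingle : ∑ V ∈ U.powerset, c (S ∪ V) = c (S ∪ ∅) := by
      refine Finset.sum_eq_single_of_mem ∅ (mem_powerset.2 (empty_subset U)) ?_
      intro V hV hVne
      refine hmax (S ∪ V) ?_
      have hd2 : Disjoint S V :=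
        (hdisj S le_rfl).mono_right (le_iff_subset.2 (mem_powerset.1 hV))
      rw [hpd, card_union_of_disjoint hd2]
      have : 0 < V.card := card_pos.2 (nonempty_iff_ne_empty.2 hVne)
      omega
    rw [hsingle, union_empty] at hS0
    exact hScne hS0
  have hbdd2 : BddAbove {d | ∃ T : Finset (Fin n), T.card = d ∧
      ShattersFam (Finset.univ.filter fun A => f A = true) T} := by
    refine ⟨n, ?_⟩
    rintro d ⟨T, rfl, -⟩
    simpa using card_le_univ T
  have hvc : (Sᶜ).card ≤ vcDimFam (Finset.univ.filter fun A => f A = true) :=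
    le_csSup hbdd2 ⟨Sᶜ, rfl, hshat⟩
  have hcompl : (Sᶜ).card = n - S.card := by
    rw [card_compl]
    simp
  have hSn : S.card ≤ n := by simpa using card_le_univ S
  omega
end

section
/- Let f : {0,1}^n → {0,1} be a non-zero Boolean function. Then VC(f) + deg_{F2}(f) ≥ n, where deg_{F2}(f) is the degree of the unique multilinear polynomial over F_2 representing f. -/
open Finset

lemma card_filter_superset {α : Type*} [DecidableEq α] (s t : Finset α) (h : t ⊆ s) :
    (s.powerset.filter (fun W => t ⊆ W)).card = 2 ^ (s.card - t.card) := by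
  rw [← Finset.card_sdiff_of_subset h, ← Finset.card_powerset]
  apply Finset.card_bij (fun W _ => W \ t)
  · intro W hW
    simp only [Finset.mem_filter, Finset.mem_powerset] at hW ⊢
    exact Finset.sdiff_subset_sdiff hW.1 le_rfl
  · intro W hW V hV hWV
    simp only [Finset.mem_filter, Finset.mem_powerset] at hW hV
    have : W \ t ∪ t = V \ t ∪ t := by rw [hWV]
    rwa [Finset.sdiff_union_of_subset hW.2, Finset.sdiff_union_of_subset hV.2] at this
  · intro V hV
    simp only [Finset.mem_powerset] at hV
    refine ⟨V ∪ t, ?_, ?_⟩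
    · simp only [Finset.mem_filter, Finset.mem_powerset]
      exact ⟨Finset.union_subset (hV.trans (Finset.sdiff_subset)) h, Finset.subset_union_right⟩
    · rw [Finset.union_sdiff_right, Finset.sdiff_eq_self_of_disjoint]
      exact Finset.disjoint_of_subset_left hV Finset.sdiff_disjoint

/-- If `f : {0,1}^n → {0,1}` is non-zero and `c` are the coefficients of its
(unique) multilinear F2-polynomial representation (so `f(1_T) = Σ_{S ⊆ T} c S` in `ZMod 2`),
then `VC(f) + deg_F2(f) ≥ n`. -/
theorem stmt1 (n : ℕ) (f : Finset (Fin n) → Bool) (hf : ∃ x, f x = true)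
    (c : Finset (Fin n) → ZMod 2)
    (hc : ∀ T : Finset (Fin n), (if f T then (1 : ZMod 2) else 0) = ∑ S ∈ T.powerset, c S) :
    n ≤ vcDimFam (Finset.univ.filter fun A => f A = true) + polyDeg c := by
  classical
  -- c is not identically zero
  have hcne : ∃ S : Finset (Fin n), c S ≠ 0 := by
    by_contra h
    push_neg at h
    obtain ⟨x, hx⟩ := hf
    have := hc x
    rw [hx] at this
    simp only [if_true] at this
    rw [Finset.sum_congr rfl (fun S _ => h S)] at this
    simp at this
  set D : Set ℕ := {d | ∃ S : Finset (Fin n), S.card = d ∧ c S ≠ 0} with hD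
  have hDne : D.Nonempty := by
    obtain ⟨S, hS⟩ := hcne
    exact ⟨S.card, S, rfl, hS⟩
  have hDbdd : BddAbove D := by
    refine ⟨n, fun d hd => ?_⟩
    obtain ⟨S, hS, _⟩ := hd
    rw [← hS]
    simpa using Finset.card_le_univ S
  have hmem : polyDeg c ∈ D := Nat.sSup_mem hDne hDbdd
  obtain ⟨Sm, hSmcard, hcSm⟩ := hmem
  have hmax : ∀ S : Finset (Fin n), c S ≠ 0 → S.card ≤ polyDeg c := by
    intro S hS
    exact le_csSup hDbdd ⟨S, rfl, hS⟩
  set d := polyDeg c with hd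
  -- the complement of Sm is shattered
  set T := Smᶜ with hT
  have hTcard : T.card = n - d := by
    rw [hT, Finset.card_compl, hSmcard]
    simp
  have hshat : ShattersFam (Finset.univ.filter fun A => f A = true) T := by
    intro U hU
    have hUSm : Disjoint U Sm := by
      intro x hx1 hx2
      intro a ha
      have h1 := hx1 ha
      have h2 := hx2 ha
      have := hU h1
      rw [hT, Finset.mem_compl] at this
      exact absurd h2 this
    have key : ∑ W ∈ Sm.powerset, (if f (U ∪ W) then (1 : ZMod 2) else 0) = c Sm := by
      calc ∑ W ∈ Sm.powerset, (if f (U ∪ W) then (1 : ZMod 2) else 0)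
          = ∑ W ∈ Sm.powerset, ∑ S ∈ (U ∪ W).powerset, c S := by
            exact Finset.sum_congr rfl fun W _ => hc (U ∪ W)
        _ = ∑ W ∈ Sm.powerset, ∑ S ∈ (U ∪ Sm).powerset, (if S ⊆ U ∪ W then c S else 0) := by
            refine Finset.sum_congr rfl fun W hW => ?_
            rw [Finset.mem_powerset] at hW
            rw [← Finset.sum_filter]
            congr 1
            ext S
            simp only [Finset.mem_filter, Finset.mem_powerset]
            constructor
            · intro h; exact ⟨h.trans (Finset.union_subset_union le_rfl hW), h⟩
            · exact fun h => h.2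
        _ = ∑ S ∈ (U ∪ Sm).powerset, ∑ W ∈ Sm.powerset, (if S ⊆ U ∪ W then c S else 0) :=
            Finset.sum_comm
        _ = ∑ S ∈ (U ∪ Sm).powerset,
              ((Sm.powerset.filter fun W => S ⊆ U ∪ W).card : ZMod 2) * c S := by
            refine Finset.sum_congr rfl fun S _ => ?_
            rw [← Finset.sum_filter, Finset.sum_const, nsmul_eq_mul]
        _ = ∑ S ∈ (U ∪ Sm).powerset, (if S = Sm then c Sm else 0) := by
            refine Finset.sum_congr rfl fun S hS => ?_
            rw [Finset.mem_powerset] at hS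
            have hfilt : (Sm.powerset.filter fun W => S ⊆ U ∪ W)
                = Sm.powerset.filter fun W => S \ U ⊆ W := by
              apply Finset.filter_congr
              intro W _
              constructor
              · intro h x hx
                rcases Finset.mem_union.mp (h (Finset.mem_sdiff.mp hx).1) with h1 | h1
                · exact absurd h1 (Finset.mem_sdiff.mp hx).2
                · exact h1
              · intro h x hx
                by_cases hxU : x ∈ U
                · exact Finset.mem_union_left _ hxU
                · exact Finset.mem_union_right _ (h (Finset.mem_sdiff.mpr ⟨hx, hxU⟩))
            have hsub : S \ U ⊆ Sm := by
              intro x hx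
              rw [Finset.mem_sdiff] at hx
              rcases Finset.mem_union.mp (hS hx.1) with h | h
              · exact absurd h hx.2
              · exact h
            rw [hfilt, card_filter_superset Sm (S \ U) hsub]
            by_cases hSeq : S = Sm
            · subst hSeq
              have : S \ U = S := Finset.sdiff_eq_self_of_disjoint (hUSm.symm)
              rw [this, Nat.sub_self, pow_zero, if_pos rfl]
              simp
            · rw [if_neg hSeq]
              by_cases hc0 : c S = 0
              · rw [hc0, mul_zero]
              · -- c S ≠ 0, so S.card ≤ d; show S \ U ≠ Sm hence exponent positive
                have hle : S.card ≤ d := hmax S hc0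
                have hne : S \ U ≠ Sm := by
                  intro heq
                  have hSmS : Sm ⊆ S := by
                    rw [← heq]; exact Finset.sdiff_subset
                  exact hSeq ((Finset.eq_of_subset_of_card_le hSmS
                    (hle.trans_eq hSmcard.symm)).symm)
                have hlt : (S \ U).card < Sm.card :=
                  Finset.card_lt_card (lt_of_le_of_ne hsub hne)
                have : Sm.card - (S \ U).card ≠ 0 := by omega
                obtain ⟨k, hk⟩ := Nat.exists_eq_succ_of_ne_zero this
                rw [hk]
                push_cast
                rw [pow_succ, show (2 : ZMod 2) = 0 from rfl, mul_zero, zero_mul]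
        _ = c Sm := by
            rw [Finset.sum_ite_eq' (U ∪ Sm).powerset Sm (fun _ => c Sm)]
            rw [if_pos (Finset.mem_powerset.mpr Finset.subset_union_right)]
    -- so some W works
    have : ∃ W ∈ Sm.powerset, f (U ∪ W) = true := by
      by_contra h
      push_neg at h
      rw [Finset.sum_congr rfl (fun W hW => by
        rw [if_neg]; simp [h W hW])] at key
      simp at key
      exact hcSm key.symm
    obtain ⟨W, hW, hfW⟩ := this
    rw [Finset.mem_powerset] at hW
    refine ⟨U ∪ W, ?_, ?_⟩
    · simp [hfW]
    · rw [Finset.union_inter_distrib_right]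
      have h1 : U ∩ T = U := Finset.inter_eq_left.mpr hU
      have h2 : W ∩ T = ∅ := by
        rw [hT]
        apply Finset.eq_empty_of_forall_notMem
        intro x hx
        rw [Finset.mem_inter, Finset.mem_compl] at hx
        exact hx.2 (hW hx.1)
      rw [h1, h2, Finset.union_empty]
  -- VC dimension is at least n - d
  have hvc : n - d ≤ vcDimFam (Finset.univ.filter fun A => f A = true) := by
    apply le_csSup
    · refine ⟨n, fun m hm => ?_⟩
      obtain ⟨T', hT', _⟩ := hm
      rw [← hT']
      simpa using Finset.card_le_univ T'
    · exact ⟨T, hTcard, hshat⟩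
  have hdn : d ≤ n := by
    rw [← hSmcard]
    simpa using Finset.card_le_univ Sm
  omega
end

section
/- Let X be a finite set, F a field, and suppose there exists a non-empty family F ⊆ 2^X and a function g : 2^X → F supported exactly on F (g(A) ≠ 0 iff A ∈ F) such that for every A ⊆ X with |A| ≤ d, Σ_{A ⊆ F' ⊆ X} g(F') = 0. Then there exists T ⊆ X with |T| = d + 1 that is shattered by F, i.e., {F' ∩ T : F' ∈ F} = 2^T. -/
open Finset

/-- If `g : 2^X → K` is supported exactly on a non-empty family `Fam` and is a
null `d`-design over the field `K` (the sum of `g` over all supersets of any `A` with `|A| ≤ d`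
vanishes), then `Fam` shatters some set of size `d + 1`. -/
theorem stmt3 {X K : Type*} [Fintype X] [DecidableEq X] [Field K] (d : ℕ)
    (Fam : Finset (Finset X)) (hFam : Fam.Nonempty) (g : Finset X → K)
    (hsupp : ∀ A : Finset X, g A ≠ 0 ↔ A ∈ Fam)
    (hdesign : ∀ A : Finset X, A.card ≤ d →
      (∑ B : Finset X, if A ⊆ B then g B else 0) = 0) :
    ∃ T : Finset X, T.card = d + 1 ∧ ShattersFam Fam T := by
  classical
  set f : Finset X → K := fun A => ∑ B : Finset X, if A ⊆ B then g B else 0 with hf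
  -- there is a set with nonzero superset-sum: take a maximum-cardinality member of Fam
  have hfA : ∃ A : Finset X, f A ≠ 0 := by
    obtain ⟨A, hAF, hmax⟩ := Fam.exists_max_image Finset.card hFam
    refine ⟨A, ?_⟩
    have hfAeq : f A = g A := by
      rw [hf]
      simp only
      rw [Fintype.sum_eq_single A]
      · simp
      · intro B hBA
        by_cases hAB : A ⊆ B
        · rw [if_pos hAB]
          by_contra hne
          have hBF := (hsupp B).mp hne
          have hlt : A.card < B.card :=
            Finset.card_lt_card (lt_of_le_of_ne hAB (Ne.symm hBA))
          exact absurd (hmax B hBF) (by omega)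
        · rw [if_neg hAB]
    rw [hfAeq]
    exact (hsupp A).mpr hAF
  -- pick T of minimum cardinality with f T ≠ 0
  obtain ⟨A₀, hA₀⟩ := hfA
  obtain ⟨T, hTmem, hTmin⟩ :=
    (Finset.univ.filter fun T : Finset X => f T ≠ 0).exists_min_image Finset.card
      ⟨A₀, by simp [hA₀]⟩
  have hfT : f T ≠ 0 := (Finset.mem_filter.mp hTmem).2
  have hsmall : ∀ W : Finset X, W.card < T.card → f W = 0 := by
    intro W hW
    by_contra hfW
    exact absurd (hTmin W (by simp [hfW])) (by omega)
  have hd1 : d + 1 ≤ T.card := by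
    by_contra h
    exact hfT (hdesign T (by omega))
  -- auxiliary: alternating sum over a powerset
  have hpow : ∀ M : Finset X,
      (∑ S ∈ M.powerset, (-1 : K) ^ S.card) = if M = ∅ then 1 else 0 := by
    intro M
    have h := Finset.sum_powerset_neg_one_pow_card (x := M)
    have : (∑ S ∈ M.powerset, (-1 : K) ^ S.card)
        = ((∑ S ∈ M.powerset, (-1 : ℤ) ^ S.card : ℤ) : K) := by
      push_cast; rfl
    rw [this, h]
    split <;> simp
  -- key inclusion-exclusion identity
  have key : ∀ U ⊆ T,
      (∑ B : Finset X, if B ∩ T = U then g B else 0)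
        = ∑ S ∈ (T \ U).powerset, (-1 : K) ^ S.card * f (U ∪ S) := by
    intro U hU
    have hrhs : ∀ S : Finset X, (-1 : K) ^ S.card * f (U ∪ S)
        = ∑ B : Finset X, (-1 : K) ^ S.card * (if U ∪ S ⊆ B then g B else 0) := by
      intro S; rw [hf]; exact Finset.mul_sum _ _ _
    rw [Finset.sum_congr rfl fun S _ => hrhs S, Finset.sum_comm]
    refine Finset.sum_congr rfl fun B _ => ?_
    by_cases hUB : U ⊆ B
    · have h1 : ∀ S ∈ (T \ U).powerset,
          (-1 : K) ^ S.card * (if U ∪ S ⊆ B then g B else 0)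
            = if S ⊆ B then (-1 : K) ^ S.card * g B else 0 := by
        intro S _
        by_cases hSB : S ⊆ B
        · rw [if_pos hSB, if_pos (Finset.union_subset hUB hSB)]
        · rw [if_neg hSB, if_neg (fun h => hSB (Finset.subset_union_right.trans h)), mul_zero]
      rw [Finset.sum_congr rfl h1]
      have h2 : (∑ S ∈ (T \ U).powerset, if S ⊆ B then (-1 : K) ^ S.card * g B else 0)
          = ∑ S ∈ ((T \ U) ∩ B).powerset, (-1 : K) ^ S.card * g B := by
        rw [Finset.sum_ite, Finset.sum_const_zero, add_zero]
        apply Finset.sum_congr _ fun _ _ => rfl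
        ext S
        simp only [Finset.mem_filter, Finset.mem_powerset, Finset.subset_inter_iff]
      rw [h2, ← Finset.sum_mul, hpow]
      by_cases hcond : B ∩ T = U
      · have hempty : (T \ U) ∩ B = ∅ := by
          ext x
          simp only [Finset.mem_inter, Finset.mem_sdiff, Finset.notMem_empty, iff_false]
          rintro ⟨⟨hxT, hxU⟩, hxB⟩
          exact hxU (hcond ▸ Finset.mem_inter.mpr ⟨hxB, hxT⟩)
        rw [if_pos hcond, if_pos hempty, one_mul]
      · have hne : (T \ U) ∩ B ≠ ∅ := by
          intro hempty
          apply hcond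
          apply Finset.Subset.antisymm
          · intro x hx
            obtain ⟨hxB, hxT⟩ := Finset.mem_inter.mp hx
            by_contra hxU
            exact absurd (hempty ▸ Finset.mem_inter.mpr ⟨Finset.mem_sdiff.mpr ⟨hxT, hxU⟩, hxB⟩)
              (Finset.notMem_empty x)
          · exact Finset.subset_inter hUB hU
        rw [if_neg hcond, if_neg hne, zero_mul]
    · have h1 : ∀ S ∈ (T \ U).powerset,
          (-1 : K) ^ S.card * (if U ∪ S ⊆ B then g B else 0) = 0 := by
        intro S _
        rw [if_neg (fun h => hUB (Finset.subset_union_left.trans h)), mul_zero]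
      rw [Finset.sum_congr rfl h1, Finset.sum_const_zero]
      rw [if_neg]
      intro hcond
      exact hUB (hcond ▸ Finset.inter_subset_left)
  -- T is shattered
  have hshat : ShattersFam Fam T := by
    intro U hU
    have hsum : (∑ B : Finset X, if B ∩ T = U then g B else 0) ≠ 0 := by
      rw [key U hU]
      have hz : ∀ S ∈ (T \ U).powerset, S ≠ T \ U → (-1 : K) ^ S.card * f (U ∪ S) = 0 := by
        intro S hS hSne
        have hSsub : S ⊆ T \ U := Finset.mem_powerset.mp hS
        have hUS : U ∪ S ⊆ T := Finset.union_subset hU (hSsub.trans (Finset.sdiff_subset))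
        have hUSne : U ∪ S ≠ T := by
          intro h
          apply hSne
          apply Finset.Subset.antisymm hSsub
          intro x hx
          obtain ⟨hxT, hxU⟩ := Finset.mem_sdiff.mp hx
          rcases Finset.mem_union.mp (h ▸ hxT) with h' | h'
          · exact absurd h' hxU
          · exact h'
        have : (U ∪ S).card < T.card :=
          Finset.card_lt_card (lt_of_le_of_ne hUS hUSne)
        rw [hsmall _ this, mul_zero]
      rw [Finset.sum_eq_single_of_mem (T \ U) (Finset.mem_powerset.mpr le_rfl) hz,
        Finset.union_sdiff_of_subset hU]
      intro h
      rcases mul_eq_zero.mp h with h' | h'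
      · exact pow_ne_zero _ (neg_ne_zero.mpr one_ne_zero) h'
      · exact hfT h'
    obtain ⟨B, _, hB⟩ := Finset.exists_ne_zero_of_sum_ne_zero hsum
    by_cases hcond : B ∩ T = U
    · exact ⟨B, (hsupp B).mp (by simpa [hcond] using hB), hcond⟩
    · exact absurd (if_neg hcond) hB
  -- shrink T to size d + 1
  obtain ⟨T', hT'sub, hT'card⟩ := T.exists_subset_card_eq hd1
  exact ⟨T', hT'card, fun U hUT' => by
    obtain ⟨A, hAF, hAT⟩ := hshat U (hUT'.trans hT'sub)
    exact ⟨A, hAF, by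
      rw [← Finset.inter_eq_left.mpr hUT', ← hAT, Finset.inter_assoc,
        Finset.inter_eq_right.mpr hT'sub]⟩⟩
end

section
/- Let F ⊆ 2^[n] be a non-empty family and suppose there exists d ≤ n - 1 such that for every S ⊆ [n] with |S| ≤ d, the number of F ∈ F with F ∩ S = ∅ is even. Then the VC-dimension of F is at least d + 1. -/
open Finset

lemma stmt4L1 (n : ℕ) (F : Finset (Finset (Fin n))) (T W : Finset (Fin n)) :
    (F.filter fun G => G ∩ (T \ W) = ∅).card
      = ∑ V ∈ W.powerset, (F.filter fun G => G ∩ T = V).card := by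
  have key : ∀ G : Finset (Fin n), G ∩ (T \ W) = ∅ ↔ G ∩ T ⊆ W := by
    intro G
    simp [Finset.eq_empty_iff_forall_notMem, Finset.subset_iff]
  rw [Finset.card_eq_sum_card_fiberwise (f := fun G => G ∩ T) (t := W.powerset)]
  · apply Finset.sum_congr rfl
    intro V hV
    simp only [mem_powerset] at hV
    rw [Finset.filter_filter]
    congr 1
    apply Finset.filter_congr
    intro G _
    constructor
    · rintro ⟨_, hV'⟩; exact hV'
    · intro hV'; exact ⟨(key G).mpr (hV' ▸ hV), hV'⟩
  · intro G hG
    simp only [mem_coe, mem_filter] at hG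
    simp only [mem_coe, mem_powerset]
    exact (key G).mp hG.2

lemma stmt4L2 (n : ℕ) (F : Finset (Finset (Fin n))) (T : Finset (Fin n))
    (hsmall : ∀ W ⊆ T, W ≠ ∅ → Even (F.filter fun G => G ∩ (T \ W) = ∅).card) :
    ∀ U ⊆ T, ((F.filter fun G => G ∩ T = U).card : ZMod 2)
      = ((F.filter fun G => G ∩ T = ∅).card : ZMod 2) := by
  intro U
  induction U using Finset.strongInductionOn with
  | _ U ih =>
    intro hUT
    rcases eq_or_ne U ∅ with rfl | hne
    · rfl
    · have h0 : ((F.filter fun G => G ∩ (T \ U) = ∅).card : ZMod 2) = 0 :=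
        ZMod.natCast_eq_zero_iff_even.mpr (hsmall U hUT hne)
      rw [stmt4L1 n F T U] at h0
      push_cast at h0
      rw [← Finset.add_sum_erase _ _ (Finset.mem_powerset_self U)] at h0
      have hNU : ((F.filter fun G => G ∩ T = U).card : ZMod 2)
          = ∑ V ∈ U.powerset.erase U, ((F.filter fun G => G ∩ T = V).card : ZMod 2) := by
        have := add_eq_zero_iff_eq_neg.mp h0
        rwa [CharTwo.neg_eq] at this
      rw [hNU]
      have hconst : ∀ V ∈ U.powerset.erase U,
          ((F.filter fun G => G ∩ T = V).card : ZMod 2)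
            = ((F.filter fun G => G ∩ T = ∅).card : ZMod 2) := by
        intro V hV
        rw [Finset.mem_erase, Finset.mem_powerset] at hV
        exact ih V (ssubset_of_subset_of_ne hV.2 hV.1) (hV.2.trans hUT)
      rw [Finset.sum_congr rfl hconst, Finset.sum_const, nsmul_eq_mul]
      have hcard : (U.powerset.erase U).card = 2 ^ U.card - 1 := by
        rw [Finset.card_erase_of_mem (Finset.mem_powerset_self U), Finset.card_powerset]
      rw [hcard]
      have hodd : Odd (2 ^ U.card - 1) := by
        have h1 : 1 ≤ 2 ^ U.card := Nat.one_le_two_pow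
        have heven : Even (2 ^ U.card) := by
          have : U.card ≠ 0 := by simpa [Finset.card_eq_zero] using hne
          exact (Nat.even_pow).mpr ⟨even_two, this⟩
        exact Nat.Even.sub_odd h1 heven odd_one
      rw [ZMod.natCast_eq_one_iff_odd.mpr hodd, one_mul]

lemma stmt4_shatters_subset (n : ℕ) (F : Finset (Finset (Fin n))) (T T' : Finset (Fin n))
    (h : ShattersFam F T) (hsub : T' ⊆ T) : ShattersFam F T' := by
  intro U hU
  obtain ⟨A, hA, hAT⟩ := h U (hU.trans hsub)
  refine ⟨A, hA, ?_⟩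
  rw [← Finset.inter_eq_right.mpr hsub, ← Finset.inter_assoc, hAT,
    Finset.inter_eq_left.mpr hU]

lemma stmt4_shatter_of_odd (n : ℕ) (F : Finset (Finset (Fin n))) (T : Finset (Fin n))
    (hsmall : ∀ W ⊆ T, W ≠ ∅ → Even (F.filter fun G => G ∩ (T \ W) = ∅).card)
    (hodd : Odd (F.filter fun G => G ∩ T = ∅).card) :
    ShattersFam F T := by
  intro U hU
  have := stmt4L2 n F T hsmall U hU
  rw [ZMod.natCast_eq_one_iff_odd.mpr hodd] at this
  have hne : (F.filter fun G => G ∩ T = U).Nonempty := by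
    rw [← Finset.card_pos]
    by_contra hc
    push_neg at hc
    interval_cases hcard : (F.filter fun G => G ∩ T = U).card
    · simp [hcard] at this
  obtain ⟨A, hA⟩ := hne
  rw [Finset.mem_filter] at hA
  exact ⟨A, hA.1, hA.2⟩

lemma stmt4_univ_case (n : ℕ) (F : Finset (Finset (Fin n))) (hF : F.Nonempty)
    (hall : ∀ S : Finset (Fin n), Even (F.filter fun G => G ∩ S = ∅).card) : False := by
  obtain ⟨G0, hG0⟩ := hF
  have hsmall : ∀ W ⊆ (univ : Finset (Fin n)), W ≠ ∅ →
      Even (F.filter fun G => G ∩ ((univ : Finset (Fin n)) \ W) = ∅).card := by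
    intro W _ _; exact hall _
  have h2 := stmt4L2 n F univ hsmall G0 (Finset.subset_univ G0)
  have h3 : ((F.filter fun G => G ∩ (univ : Finset (Fin n)) = ∅).card : ZMod 2) = 0 := by
    have := hall (univ : Finset (Fin n))
    exact ZMod.natCast_eq_zero_iff_even.mpr this
  rw [h3] at h2
  have h4 : (F.filter fun G => G ∩ (univ : Finset (Fin n)) = G0) = {G0} := by
    have he : (F.filter fun G => G ∩ (univ : Finset (Fin n)) = G0)
        = F.filter (fun G => G = G0) := by
      apply Finset.filter_congr
      intro G _
      simp
    rw [he, Finset.filter_eq']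
    simp [hG0]
  rw [h4] at h2
  simp at h2

lemma stmt4_step (n : ℕ) (F : Finset (Finset (Fin n))) (hF : F.Nonempty) (d : ℕ)
    (hd : d ≤ n - 1)
    (h : ∀ S : Finset (Fin n), S.card ≤ d → Even (F.filter fun G => G ∩ S = ∅).card) :
    (∃ T : Finset (Fin n), T.card = d + 1 ∧ ShattersFam F T) ∨
      (d + 1 ≤ n - 1 ∧
        ∀ S : Finset (Fin n), S.card ≤ d + 1 → Even (F.filter fun G => G ∩ S = ∅).card) := by
  by_cases hall : ∀ T : Finset (Fin n), T.card = d + 1 →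
      Even (F.filter fun G => G ∩ T = ∅).card
  · by_cases hlt : d + 1 ≤ n - 1
    · right
      refine ⟨hlt, ?_⟩
      intro S hS
      rcases le_or_gt S.card d with h1 | h1
      · exact h S h1
      · exact hall S (by omega)
    · exfalso
      apply stmt4_univ_case n F hF
      intro S
      rcases le_or_gt S.card d with h1 | h1
      · exact h S h1
      · have hSn : S.card ≤ n := by
          have := Finset.card_le_univ S
          simpa using this
        exact hall S (by omega)
  · push_neg at hall
    obtain ⟨T, hTcard, hTodd⟩ := hall
    rw [Nat.not_even_iff_odd] at hTodd
    left
    refine ⟨T, hTcard, stmt4_shatter_of_odd n F T ?_ hTodd⟩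
    intro W hWT hWne
    apply h
    have h1 : 1 ≤ W.card := Finset.card_pos.mpr (Finset.nonempty_of_ne_empty hWne)
    rw [Finset.card_sdiff_of_subset hWT, hTcard]
    omega

lemma stmt4_aux (n : ℕ) (F : Finset (Finset (Fin n))) (hF : F.Nonempty) :
    ∀ k d : ℕ, n - 1 - d ≤ k → d ≤ n - 1 →
    (∀ S : Finset (Fin n), S.card ≤ d → Even (F.filter fun G => G ∩ S = ∅).card) →
    ∃ T : Finset (Fin n), T.card = d + 1 ∧ ShattersFam F T := by
  intro k
  induction k with
  | zero =>
    intro d hk hd h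
    rcases stmt4_step n F hF d hd h with hL | ⟨hlt, _⟩
    · exact hL
    · omega
  | succ k ih =>
    intro d hk hd h
    rcases stmt4_step n F hF d hd h with hL | ⟨hlt, h'⟩
    · exact hL
    · obtain ⟨T, hTcard, hTs⟩ := ih (d + 1) (by omega) hlt h'
      obtain ⟨T', hT'sub, hT'card⟩ := Finset.exists_subset_card_eq (s := T) (n := d + 1) (by omega)
      exact ⟨T', hT'card, stmt4_shatters_subset n F T T' hTs hT'sub⟩

/-- If `F ⊆ 2^[n]` is non-empty and for some `d ≤ n - 1` every `S` with
`|S| ≤ d` is disjoint from an even number of members of `F`, then `VC(F) ≥ d + 1`. -/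
theorem stmt4 (n : ℕ) (F : Finset (Finset (Fin n))) (hF : F.Nonempty) (d : ℕ)
    (hd : d ≤ n - 1)
    (h : ∀ S : Finset (Fin n), S.card ≤ d → Even (F.filter fun G => G ∩ S = ∅).card) :
    d + 1 ≤ vcDimFam F := by
  obtain ⟨T, hTc, hTs⟩ := stmt4_aux n F hF (n - 1 - d) d le_rfl hd h
  have hbdd : BddAbove {m | ∃ T : Finset (Fin n), T.card = m ∧ ShattersFam F T} := by
    refine ⟨n, ?_⟩
    rintro m ⟨T, rfl, -⟩
    simpa using Finset.card_le_univ T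
  exact le_csSup hbdd ⟨T, hTc, hTs⟩
end

section
/- Let f : {0,1}^n → {0,1} be a non-zero Boolean function. Then log_2 |supp(f)| + log_2 |supp(f̂)| ≥ n, i.e., |supp(f)| · |supp(f̂)| ≥ 2^n, where supp(f̂) = {S ⊆ [n] : f̂(S) ≠ 0} is the Fourier support. -/
open Finset
open scoped symmDiff

/-- The Fourier coefficient `f̂(S) = 2⁻ⁿ Σ_x f(x)·(-1)^{|x ∩ S|}`, identifying a point of
`{0,1}ⁿ` with the `x : Finset (Fin n)` of coordinates equal to 1. -/
noncomputable def boolFourierCoeff {n : ℕ} (f : Finset (Fin n) → Bool) (S : Finset (Fin n)) : ℝ :=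
  (2 ^ n : ℝ)⁻¹ * ∑ x : Finset (Fin n), (if f x then (1 : ℝ) else 0) * (-1) ^ (x ∩ S).card

lemma negOnePow_symmDiff {n : ℕ} (A B : Finset (Fin n)) :
    ((-1 : ℝ)) ^ ((A ∆ B).card) = (-1) ^ A.card * (-1) ^ B.card := by
  have hd : A ∆ B = (A \ B) ∪ (B \ A) := by
    ext j; simp [Finset.mem_symmDiff]; try tauto
  have h2 : (A ∆ B).card + 2 * (A ∩ B).card = A.card + B.card := by
    have hA : (A \ B).card + (A ∩ B).card = A.card := Finset.card_sdiff_add_card_inter A B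
    have hB : (B \ A).card + (B ∩ A).card = B.card := Finset.card_sdiff_add_card_inter B A
    have hcd : (A ∆ B).card = (A \ B).card + (B \ A).card := by
      rw [hd, Finset.card_union_of_disjoint disjoint_sdiff_sdiff]
    rw [Finset.inter_comm B A] at hB
    omega
  have : ((-1 : ℝ)) ^ ((A ∆ B).card + 2 * (A ∩ B).card) = (-1) ^ (A.card + B.card) := by
    rw [h2]
  rw [pow_add, pow_mul] at this
  norm_num at this
  rw [this, pow_add]

lemma charSum_eq_zero {n : ℕ} (T : Finset (Fin n)) (hT : T.Nonempty) :
    ∑ S : Finset (Fin n), ((-1 : ℝ)) ^ ((T ∩ S).card) = 0 := by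
  obtain ⟨i, hi⟩ := hT
  refine Finset.sum_involution (fun S _ => S ∆ {i}) ?_ ?_ (fun S _ => Finset.mem_univ _) ?_
  · intro S _
    have h1 : T ∩ (S ∆ {i}) = (T ∩ S) ∆ (T ∩ {i}) := by
      ext j; simp [Finset.mem_symmDiff]; try tauto
    have h2 : T ∩ {i} = {i} := by
      ext j; simp only [Finset.mem_inter, Finset.mem_singleton]
      constructor
      · rintro ⟨_, rfl⟩; rfl
      · rintro rfl; exact ⟨hi, rfl⟩
    show ((-1 : ℝ)) ^ ((T ∩ S).card) + (-1) ^ ((T ∩ (S ∆ {i})).card) = 0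
    rw [h1, h2, negOnePow_symmDiff, Finset.card_singleton, pow_one]
    ring
  · intro S _ _ h
    have : i ∈ S ∆ {i} ↔ i ∈ S := by rw [h]
    simp [Finset.mem_symmDiff] at this
  · intro S _
    simp [symmDiff_symmDiff_cancel_right]

lemma char_mul {n : ℕ} (y x S : Finset (Fin n)) :
    ((-1 : ℝ)) ^ ((y ∩ S).card) * (-1) ^ ((x ∩ S).card) =
      (-1) ^ (((y ∆ x) ∩ S).card) := by
  have h1 : (y ∆ x) ∩ S = (y ∩ S) ∆ (x ∩ S) := by
    ext j; simp [Finset.mem_symmDiff]; try tauto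
  rw [h1, negOnePow_symmDiff]

lemma inversion {n : ℕ} (f : Finset (Fin n) → Bool) (x : Finset (Fin n)) :
    ∑ S : Finset (Fin n), boolFourierCoeff f S * (-1) ^ ((x ∩ S).card) =
      (if f x then (1 : ℝ) else 0) := by
  unfold boolFourierCoeff
  simp_rw [mul_assoc, ← Finset.mul_sum, Finset.sum_mul, mul_assoc,
    char_mul]
  rw [Finset.sum_comm]
  have key : ∀ y : Finset (Fin n),
      ∑ S : Finset (Fin n), (if f y then (1 : ℝ) else 0) * (-1) ^ (((y ∆ x) ∩ S).card) =
        if y = x then (if f x then (2 ^ n : ℝ) else 0) else 0 := by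
    intro y
    rw [← Finset.mul_sum]
    by_cases hyx : y = x
    · subst hyx
      have hsum : ∑ S : Finset (Fin n), ((-1 : ℝ)) ^ (((y ∆ y) ∩ S).card) = 2 ^ n := by
        have h0 : ∀ S : Finset (Fin n), ((y ∆ y) ∩ S).card = 0 := by
          intro S
          simp [symmDiff_self, Finset.bot_eq_empty]
        simp only [h0, pow_zero, Finset.sum_const, Finset.card_univ, Fintype.card_finset,
          Fintype.card_fin, nsmul_eq_mul, mul_one]
        push_cast; ring
      rw [hsum, if_pos rfl]
      split <;> ring
    · rw [if_neg hyx]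
      have hne : (y ∆ x).Nonempty := by
        rw [Finset.nonempty_iff_ne_empty]
        intro h
        exact hyx (symmDiff_eq_bot.mp h)
      rw [charSum_eq_zero _ hne, mul_zero]
  rw [Finset.sum_congr rfl (fun y _ => key y), Finset.sum_ite_eq' Finset.univ x _,
    if_pos (Finset.mem_univ x)]
  split
  · field_simp
  · ring

lemma coeff_abs_le {n : ℕ} (f : Finset (Fin n) → Bool) (S : Finset (Fin n)) :
    |boolFourierCoeff f S| ≤
      (2 ^ n : ℝ)⁻¹ * (Finset.univ.filter fun x => f x = true).card := by
  unfold boolFourierCoeff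
  rw [abs_mul, abs_inv, abs_pow, abs_two]
  gcongr
  calc |∑ x : Finset (Fin n), (if f x then (1 : ℝ) else 0) * (-1) ^ (x ∩ S).card|
      ≤ ∑ x : Finset (Fin n), |(if f x then (1 : ℝ) else 0) * (-1) ^ (x ∩ S).card| :=
        Finset.abs_sum_le_sum_abs _ _
    _ = ∑ x : Finset (Fin n), (if f x then (1 : ℝ) else 0) := by
        refine Finset.sum_congr rfl fun x _ => ?_
        rw [abs_mul, abs_pow, abs_neg, abs_one, one_pow, mul_one]
        split <;> simp
    _ = ((Finset.univ.filter fun x => f x = true).card : ℝ) := by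
        rw [Finset.sum_boole]

/-- **uncertainty principle.** For non-zero `f : {0,1}^n → {0,1}`,
`|supp(f)| * |supp(f̂)| ≥ 2^n` (i.e. `log₂|supp f| + log₂|supp f̂| ≥ n`). -/
theorem stmt6 (n : ℕ) (f : Finset (Fin n) → Bool) (hf : ∃ x, f x = true) :
    2 ^ n ≤ (Finset.univ.filter fun x => f x = true).card *
      {S : Finset (Fin n) | boolFourierCoeff f S ≠ 0}.ncard := by
  obtain ⟨x₀, hx₀⟩ := hf
  set A : ℕ := (Finset.univ.filter fun x => f x = true).card with hA
  set Bset : Set (Finset (Fin n)) := {S | boolFourierCoeff f S ≠ 0} with hBset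
  have hBfin : Bset.Finite := Set.toFinite _
  set B : Finset (Finset (Fin n)) :=
    Finset.univ.filter (fun S => boolFourierCoeff f S ≠ 0) with hB
  have hncard : Bset.ncard = B.card := by
    rw [hBset, hB, Set.ncard_eq_toFinset_card']
    congr 1
    ext S
    simp [Set.mem_toFinset]
  have h1 : (1 : ℝ) = ∑ S : Finset (Fin n), boolFourierCoeff f S * (-1) ^ ((x₀ ∩ S).card) := by
    rw [inversion f x₀, if_pos hx₀]
  have h2 : (1 : ℝ) ≤ (B.card : ℝ) * ((2 ^ n : ℝ)⁻¹ * A) := by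
    calc (1 : ℝ) = |∑ S : Finset (Fin n), boolFourierCoeff f S * (-1) ^ ((x₀ ∩ S).card)| := by
          rw [← h1]; norm_num
      _ ≤ ∑ S : Finset (Fin n), |boolFourierCoeff f S * (-1) ^ ((x₀ ∩ S).card)| :=
          Finset.abs_sum_le_sum_abs _ _
      _ = ∑ S : Finset (Fin n), |boolFourierCoeff f S| := by
          refine Finset.sum_congr rfl fun S _ => ?_
          rw [abs_mul, abs_pow, abs_neg, abs_one, one_pow, mul_one]
      _ = ∑ S ∈ B, |boolFourierCoeff f S| := by
          rw [hB]
          rw [Finset.sum_filter_of_ne]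
          intro S _ h
          intro h0
          exact h (by rw [h0, abs_zero])
      _ ≤ ∑ _S ∈ B, (2 ^ n : ℝ)⁻¹ * A :=
          Finset.sum_le_sum fun S _ => coeff_abs_le f S
      _ = (B.card : ℝ) * ((2 ^ n : ℝ)⁻¹ * A) := by
          rw [Finset.sum_const, nsmul_eq_mul]
  have hpow : (0 : ℝ) < 2 ^ n := by positivity
  have h3 : (2 : ℝ) ^ n ≤ (A : ℝ) * B.card := by
    have := mul_le_mul_of_nonneg_left h2 hpow.le
    rw [mul_one] at this
    calc (2 : ℝ) ^ n ≤ 2 ^ n * ((B.card : ℝ) * ((2 ^ n : ℝ)⁻¹ * A)) := this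
      _ = (A : ℝ) * B.card := by rw [mul_left_comm, mul_inv_cancel_left₀ hpow.ne', mul_comm]
  rw [hncard]
  exact_mod_cast h3
end

section
/- Suppose P ∈ F_2[X_1,…,X_n] satisfies P(x) ≠ 0 for all x ∈ {0,1}^n with Hamming weight at most r, and P(x) = 0 for all x ∈ {0,1}^n with Hamming weight greater than r. Then deg(P) ≥ n - r. -/
open Finset

private lemma lor_bounds : ∀ N a b : ℕ, a + b ≤ N →
    (a ||| b ≤ a + b ∧ a ≤ (a ||| b) ∧ b ≤ (a ||| b)) := by
  intro N
  induction N with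
  | zero =>
    intro a b h
    have hz : a = 0 ∧ b = 0 := by omega
    simp [hz.1, hz.2]
  | succ N ih =>
    intro a b h
    rcases Nat.eq_zero_or_pos (a + b) with h0 | h0
    · have hz : a = 0 ∧ b = 0 := by omega
      simp [hz.1, hz.2]
    · have hdiv : (a ||| b) / 2 = a / 2 ||| b / 2 := Nat.or_div_two
      have hmod : (a ||| b) % 2 = 1 ↔ a % 2 = 1 ∨ b % 2 = 1 := Nat.or_mod_two_eq_one
      have := ih (a / 2) (b / 2) (by omega)
      omega

private lemma choose_lor_odd : ∀ N, ∀ r s : ℕ, r + s ≤ N → ((r ||| s).choose r) % 2 = 1 := by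
  intro N
  induction N with
  | zero =>
    intro r s h
    have hz : r = 0 ∧ s = 0 := by omega
    simp [hz.1, hz.2]
  | succ N ih =>
    intro r s h
    rcases Nat.eq_zero_or_pos (r + s) with h0 | h0
    · have hz : r = 0 ∧ s = 0 := by omega
      simp [hz.1, hz.2]
    · have lucas := @Choose.choose_modEq_choose_mod_mul_choose_div_nat (r ||| s) r 2 ⟨Nat.prime_two⟩
      have hdiv : (r ||| s) / 2 = r / 2 ||| s / 2 := Nat.or_div_two
      have hmod : (r ||| s) % 2 = 1 ↔ r % 2 = 1 ∨ s % 2 = 1 := Nat.or_mod_two_eq_one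
      have ihh : ((r / 2 ||| s / 2).choose (r / 2)) % 2 = 1 := ih _ _ (by omega)
      have hm : (((r ||| s) % 2).choose (r % 2)) % 2 = 1 := by
        rcases Nat.mod_two_eq_zero_or_one r with hr | hr
        · simp [hr]
        · have h1 : (r ||| s) % 2 = 1 := hmod.mpr (Or.inl hr)
          simp [hr, h1]
      have heq := lucas
      unfold Nat.ModEq at heq
      rw [Nat.mul_mod, hdiv] at heq
      rw [heq, hm, ihh]

private lemma sum_choose_parity (j : ℕ) : ∀ r : ℕ,
    (∑ k ∈ range (r + 1), ((j + 1).choose k : ZMod 2)) = (j.choose r : ZMod 2) := by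
  intro r
  induction r with
  | zero => simp
  | succ r ih =>
    rw [Finset.sum_range_succ, ih, Nat.choose_succ_succ]
    push_cast
    rw [← add_assoc]
    rw [CharTwo.add_self_eq_zero, zero_add]

private lemma deg_ge_of_sum {n : ℕ} (P : MvPolynomial (Fin n) (ZMod 2)) (S : Finset (Fin n))
    (h : (∑ T ∈ S.powerset, MvPolynomial.eval (fun i => if i ∈ T then (1 : ZMod 2) else 0) P) ≠ 0) :
    S.card ≤ P.totalDegree := by
  have heval : ∀ T ∈ S.powerset, MvPolynomial.eval (fun i => if i ∈ T then (1:ZMod 2) else 0) P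
      = ∑ d ∈ P.support, MvPolynomial.coeff d P * (if d.support ⊆ T then 1 else 0) := by
    intro T _
    rw [MvPolynomial.eval_eq]
    refine Finset.sum_congr rfl fun d _ => ?_
    congr 1
    by_cases hsub : d.support ⊆ T
    · rw [if_pos hsub]
      apply Finset.prod_eq_one
      intro i hi
      rw [if_pos (hsub hi), one_pow]
    · rw [if_neg hsub]
      obtain ⟨i, hiS, hiT⟩ := Finset.not_subset.mp hsub
      apply Finset.prod_eq_zero hiS
      rw [if_neg hiT]
      exact zero_pow (Finsupp.mem_support_iff.mp hiS)
  rw [Finset.sum_congr rfl heval, Finset.sum_comm] at h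
  obtain ⟨d, hd, hne⟩ := Finset.exists_ne_zero_of_sum_ne_zero h
  rw [← Finset.mul_sum, Finset.sum_boole] at hne
  set A := d.support with hA
  have hcardne : (((S.powerset.filter (fun T => A ⊆ T)).card : ZMod 2)) ≠ 0 := by
    intro hc
    rw [hc, mul_zero] at hne
    exact hne rfl
  have hcardpos : (S.powerset.filter (fun T => A ⊆ T)).Nonempty := by
    rw [Finset.nonempty_iff_ne_empty]
    intro he
    rw [he] at hcardne
    simp at hcardne
  have hAS : A ⊆ S := by
    obtain ⟨T, hT⟩ := hcardpos
    rw [Finset.mem_filter, Finset.mem_powerset] at hT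
    exact hT.2.trans hT.1
  have hcard : (S.powerset.filter (fun T => A ⊆ T)).card = (S \ A).powerset.card := by
    apply Finset.card_bij (fun T _ => T \ A)
    · intro T hT
      rw [Finset.mem_filter, Finset.mem_powerset] at hT
      rw [Finset.mem_powerset]
      exact Finset.sdiff_subset_sdiff hT.1 (le_refl _)
    · intro T₁ hT₁ T₂ hT₂ he
      rw [Finset.mem_filter] at hT₁ hT₂
      rw [← Finset.sdiff_union_of_subset hT₁.2, ← Finset.sdiff_union_of_subset hT₂.2, he]
    · intro U hU
      rw [Finset.mem_powerset] at hU
      refine ⟨U ∪ A, ?_, ?_⟩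
      · rw [Finset.mem_filter, Finset.mem_powerset]
        exact ⟨Finset.union_subset (hU.trans (Finset.sdiff_subset)) hAS, Finset.subset_union_right⟩
      · rw [Finset.union_sdiff_right, Finset.sdiff_eq_self_of_disjoint]
        exact Finset.disjoint_of_subset_left hU Finset.sdiff_disjoint
  have hk : (S \ A).card = 0 := by
    by_contra hk
    rw [hcard, Finset.card_powerset] at hcardne
    apply hcardne
    rw [ZMod.natCast_eq_zero_iff]
    exact dvd_pow_self 2 hk
  have hAeq : A = S := by
    apply Finset.eq_of_subset_of_card_le hAS
    have := Finset.card_sdiff_of_subset hAS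
    omega
  calc S.card = ∑ i ∈ A, 1 := by rw [hAeq, Finset.card_eq_sum_ones]
    _ ≤ ∑ i ∈ A, d i := by
        apply Finset.sum_le_sum
        intro i hi
        exact Nat.one_le_iff_ne_zero.mpr (Finsupp.mem_support_iff.mp hi)
    _ = d.sum fun _ e => e := rfl
    _ ≤ P.totalDegree := MvPolynomial.le_totalDegree hd


/-- **Sziklai–Weiner bound over F2.** If `P ∈ F2[X1,…,Xn]` is non-zero at
every point of Hamming weight at most `r` and zero at every point of Hamming weight
greater than `r`, then `deg P ≥ n - r`. (Every point of `F2^n` is a 0/1 point.) -/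
theorem stmt7 (n r : ℕ) (P : MvPolynomial (Fin n) (ZMod 2))
    (h1 : ∀ x : Fin n → ZMod 2, (Finset.univ.filter fun i => x i ≠ 0).card ≤ r →
      MvPolynomial.eval x P ≠ 0)
    (h2 : ∀ x : Fin n → ZMod 2, r < (Finset.univ.filter fun i => x i ≠ 0).card →
      MvPolynomial.eval x P = 0) :
    n - r ≤ P.totalDegree := by
  rcases le_or_gt n r with hnr | hnr
  · simp [Nat.sub_eq_zero_of_le hnr]
  · set j := r ||| (n - r - 1) with hj
    have hb := lor_bounds (r + (n - r - 1)) r (n - r - 1) le_rfl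
    have hmn : j + 1 ≤ n := by omega
    obtain ⟨S, hSsub, hScard⟩ := Finset.exists_subset_card_eq (s := (Finset.univ : Finset (Fin n))) (n := j + 1)
      (by simpa using hmn)
    have hone : ∀ a : ZMod 2, a ≠ 0 → a = 1 := by decide
    have hsum : (∑ T ∈ S.powerset,
        MvPolynomial.eval (fun i => if i ∈ T then (1 : ZMod 2) else 0) P) ≠ 0 := by
      have hev : ∀ T ∈ S.powerset, MvPolynomial.eval (fun i => if i ∈ T then (1:ZMod 2) else 0) P
          = (if T.card ≤ r then 1 else 0) := by
        intro T _
        have hw : (Finset.univ.filter fun i => (if i ∈ T then (1:ZMod 2) else 0) ≠ 0) = T := by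
          ext i
          by_cases hi : i ∈ T <;> simp [hi]
        by_cases hT : T.card ≤ r
        · rw [if_pos hT]
          exact hone _ (h1 (fun i => if i ∈ T then (1:ZMod 2) else 0) (by rw [hw]; exact hT))
        · rw [if_neg hT]
          exact h2 _ (by rw [hw]; omega)
      rw [Finset.sum_congr rfl hev,
        Finset.sum_powerset_apply_card (fun k => if k ≤ r then (1:ZMod 2) else 0)]
      have hterm : ∀ k ∈ range (S.card + 1),
          (S.card.choose k) • (if k ≤ r then (1:ZMod 2) else 0)
          = (if k ≤ r then (((j+1).choose k : ZMod 2)) else 0) := by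
        intro k _
        by_cases hk : k ≤ r <;> simp [hk, hScard, nsmul_eq_mul]
      rw [Finset.sum_congr rfl hterm, hScard]
      have hsub : ∑ k ∈ range (r + 1), (if k ≤ r then (((j+1).choose k : ZMod 2)) else 0)
          = ∑ k ∈ range (j + 1 + 1), (if k ≤ r then (((j+1).choose k : ZMod 2)) else 0) := by
        apply Finset.sum_subset (Finset.range_subset_range.mpr (by omega))
        intro k _ hk
        rw [Finset.mem_range] at hk
        rw [if_neg (by omega)]
      rw [← hsub]
      have : ∑ k ∈ range (r + 1), (if k ≤ r then (((j+1).choose k : ZMod 2)) else 0)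
          = ∑ k ∈ range (r + 1), (((j+1).choose k : ZMod 2)) := by
        apply Finset.sum_congr rfl
        intro k hk
        rw [Finset.mem_range] at hk
        rw [if_pos (by omega)]
      rw [this, sum_choose_parity j r]
      have hodd := choose_lor_odd (r + (n - r - 1)) r (n - r - 1) le_rfl
      rw [← hj] at hodd
      intro h0
      rw [ZMod.natCast_eq_zero_iff] at h0
      omega
    have := deg_ge_of_sum P S hsum
    omega
end

section
/- For every non-zero Boolean function f : {0,1}^n → {0,1}, deg_{F2}(f) ≤ log_2 |supp(f̂)|, where supp(f̂) is the set of S ⊆ [n] with nonzero real Fourier coefficient f̂(S). -/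
open Finset

lemma prod_sign {n : ℕ} (x T : Finset (Fin n)) :
    (∏ i ∈ T, (if i ∈ x then (-1 : ℝ) else 1)) = (-1 : ℝ) ^ ((x ∩ T).card) := by
  rw [← Finset.prod_filter, Finset.filter_mem_eq_inter, Finset.prod_const,
    Finset.inter_comm]

lemma charSum {n : ℕ} (x A : Finset (Fin n)) :
    ∑ T ∈ A.powerset, (-1 : ℝ) ^ ((x ∩ T).card) =
      if x ∩ A = ∅ then (2 : ℝ) ^ A.card else 0 := by
  have h := Finset.prod_add (fun i => if i ∈ x then (-1 : ℝ) else 1) (fun _ => (1 : ℝ)) A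
  simp only [prod_const_one, mul_one, prod_sign] at h
  rw [← h]
  by_cases hxA : x ∩ A = ∅
  · rw [if_pos hxA]
    have : ∀ i ∈ A, ((if i ∈ x then (-1 : ℝ) else 1) + 1) = 2 := by
      intro i hi
      have : i ∉ x := fun hix => (Finset.eq_empty_iff_forall_notMem.mp hxA i
        (Finset.mem_inter.mpr ⟨hix, hi⟩))
      simp [this]; norm_num
    rw [Finset.prod_congr rfl this, Finset.prod_const]
  · rw [if_neg hxA]
    obtain ⟨i, hi⟩ := Finset.nonempty_iff_ne_empty.mpr hxA
    obtain ⟨hix, hiA⟩ := Finset.mem_inter.mp hi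
    exact Finset.prod_eq_zero hiA (by simp [hix])

lemma card_filter_superset_s9 {n : ℕ} (S U : Finset (Fin n)) (hU : U ⊆ S) :
    (S.powerset.filter (fun T => U ⊆ T)).card = 2 ^ ((S \ U).card) := by
  rw [← Finset.card_powerset]
  apply Finset.card_nbij' (fun T => T \ U) (fun T => T ∪ U)
  · intro T hT
    change T ∈ S.powerset.filter (fun T => U ⊆ T) at hT
    change T \ U ∈ (S \ U).powerset
    simp only [Finset.mem_filter, Finset.mem_powerset] at hT ⊢
    exact Finset.sdiff_subset_sdiff hT.1 (Finset.Subset.refl U)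
  · intro T hT
    change T ∈ (S \ U).powerset at hT
    simp only [Finset.mem_powerset] at hT
    change T ∪ U ∈ S.powerset.filter (fun T => U ⊆ T)
    simp only [Finset.mem_filter, Finset.mem_powerset]
    refine ⟨Finset.union_subset (hT.trans (Finset.sdiff_subset)) hU, Finset.subset_union_right⟩
  · intro T hT
    change T ∈ S.powerset.filter (fun T => U ⊆ T) at hT
    simp only [Finset.mem_filter, Finset.mem_powerset] at hT
    exact Finset.sdiff_union_of_subset hT.2
  · intro T hT
    change T ∈ (S \ U).powerset at hT
    simp only [Finset.mem_powerset] at hT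
    have : Disjoint T U := Finset.disjoint_of_subset_left hT Finset.sdiff_disjoint
    show (T ∪ U) \ U = T
    rw [Finset.union_sdiff_distrib, Finset.sdiff_self, Finset.union_empty, Finset.sdiff_eq_self_of_disjoint this]

lemma mobius {n : ℕ} (g : Finset (Fin n) → ZMod 2) (c2 : Finset (Fin n) → ZMod 2)
    (h2 : ∀ T : Finset (Fin n), g T = ∑ S ∈ T.powerset, c2 S) (S : Finset (Fin n)) :
    ∑ T ∈ S.powerset, g T = c2 S := by
  have step1 : ∀ T ∈ S.powerset, g T = ∑ U ∈ S.powerset, if U ⊆ T then c2 U else 0 := by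
    intro T hT
    rw [h2 T, ← Finset.sum_filter]
    congr 1
    ext U
    simp only [Finset.mem_filter, Finset.mem_powerset] at *
    exact ⟨fun h => ⟨h.trans hT, h⟩, fun h => h.2⟩
  rw [Finset.sum_congr rfl step1, Finset.sum_comm]
  have step2 : ∀ U ∈ S.powerset,
      (∑ T ∈ S.powerset, if U ⊆ T then c2 U else 0) = if U = S then c2 U else 0 := by
    intro U hU
    rw [← Finset.sum_filter, Finset.sum_const, card_filter_superset_s9 S U (Finset.mem_powerset.mp hU)]
    by_cases h : U = S
    · subst h; simp
    · rw [if_neg h]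
      have hne : (S \ U).Nonempty := by
        rw [Finset.sdiff_nonempty]
        exact fun hc => h (Finset.Subset.antisymm (Finset.mem_powerset.mp hU) hc)
      obtain ⟨k, hk⟩ : ∃ k, (S \ U).card = k + 1 :=
        ⟨(S \ U).card - 1, by have := Finset.card_pos.mpr hne; omega⟩
      rw [hk, pow_succ, mul_smul, two_smul, CharTwo.add_self_eq_zero, smul_zero]
  rw [Finset.sum_congr rfl step2, Finset.sum_ite_eq' S.powerset S c2]
  simp

lemma innerSum {n : ℕ} (x S R : Finset (Fin n)) (hR : R ⊆ S) :
    ∑ T ∈ univ.filter (fun T => T ∩ S = R), (-1 : ℝ) ^ ((x ∩ T).card) =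
      (-1 : ℝ) ^ ((x ∩ R).card) *
        (if x ⊆ S then (2 : ℝ) ^ ((univ \ S : Finset (Fin n)).card) else 0) := by
  have hcond : (x ∩ (univ \ S) = ∅) ↔ x ⊆ S := by
    simp [Finset.eq_empty_iff_forall_notMem, Finset.subset_iff]
  rw [← if_congr hcond rfl rfl, ← charSum x (univ \ S), Finset.mul_sum]
  apply Finset.sum_nbij' (i := fun T => T \ S) (j := fun T' => T' ∪ R)
  · intro T hT
    simp only [Finset.mem_powerset]
    exact Finset.sdiff_subset_sdiff (Finset.subset_univ T) (Finset.Subset.refl S)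
  · intro T' hT'
    simp only [Finset.mem_powerset] at hT'
    have hd : Disjoint T' S := Finset.disjoint_of_subset_left hT' Finset.sdiff_disjoint
    simp only [Finset.mem_filter, Finset.mem_univ, true_and]
    rw [Finset.union_inter_distrib_right, Finset.disjoint_iff_inter_eq_empty.mp hd,
      Finset.empty_union, Finset.inter_eq_left.mpr hR]
  · intro T hT
    simp only [Finset.mem_filter, Finset.mem_univ, true_and] at hT
    rw [← hT]
    ext i
    simp only [Finset.mem_union, Finset.mem_sdiff, Finset.mem_inter]
    tauto
  · intro T' hT'
    simp only [Finset.mem_powerset] at hT'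
    have hd : Disjoint T' S := Finset.disjoint_of_subset_left hT' Finset.sdiff_disjoint
    rw [Finset.union_sdiff_distrib, Finset.sdiff_eq_self_of_disjoint hd,
      Finset.sdiff_eq_empty_iff_subset.mpr hR, Finset.union_empty]
  · intro T hT
    simp only [Finset.mem_filter, Finset.mem_univ, true_and] at hT
    have hsplit : x ∩ T = (x ∩ R) ∪ (x ∩ (T \ S)) := by
      ext i
      simp only [Finset.mem_inter, Finset.mem_union, Finset.mem_sdiff]
      constructor
      · intro ⟨hix, hiT⟩
        by_cases hiS : i ∈ S
        · left; exact ⟨hix, by rw [← hT]; exact Finset.mem_inter.mpr ⟨hiT, hiS⟩⟩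
        · right; exact ⟨hix, hiT, hiS⟩
      · rintro (⟨hix, hiR⟩ | ⟨hix, hiT, _⟩)
        · have : i ∈ T ∩ S := by rw [hT]; exact hiR
          exact ⟨hix, (Finset.mem_inter.mp this).1⟩
        · exact ⟨hix, hiT⟩
    have hdisj : Disjoint (x ∩ R) (x ∩ (T \ S)) := by
      rw [Finset.disjoint_left]
      intro i hi1 hi2
      simp only [Finset.mem_inter, Finset.mem_sdiff] at hi1 hi2
      exact hi2.2.2 (hR hi1.2)
    rw [hsplit, Finset.card_union_of_disjoint hdisj, pow_add]

lemma keySum {n : ℕ} (f : Finset (Fin n) → Bool) (S R : Finset (Fin n)) (hR : R ⊆ S) :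
    ∑ T ∈ univ.filter (fun T => T ∩ S = R), boolFourierCoeff f T =
      (2 ^ n : ℝ)⁻¹ * (2 : ℝ) ^ ((univ \ S : Finset (Fin n)).card) *
        ∑ x ∈ S.powerset, (if f x then (-1 : ℝ) ^ ((x ∩ R).card) else 0) := by
  set M := ((univ \ S : Finset (Fin n)).card) with hM
  calc ∑ T ∈ univ.filter (fun T => T ∩ S = R), boolFourierCoeff f T
      = (2 ^ n : ℝ)⁻¹ * ∑ T ∈ univ.filter (fun T => T ∩ S = R),
          ∑ x : Finset (Fin n), (if f x then (1 : ℝ) else 0) * (-1) ^ ((x ∩ T).card) := by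
        simp only [boolFourierCoeff]; rw [Finset.mul_sum]
    _ = (2 ^ n : ℝ)⁻¹ * ∑ x : Finset (Fin n), ∑ T ∈ univ.filter (fun T => T ∩ S = R),
          (if f x then (1 : ℝ) else 0) * (-1) ^ ((x ∩ T).card) := by
        rw [Finset.sum_comm]
    _ = (2 ^ n : ℝ)⁻¹ * ∑ x : Finset (Fin n), (if f x then (1 : ℝ) else 0) *
          ((-1 : ℝ) ^ ((x ∩ R).card) * (if x ⊆ S then (2 : ℝ) ^ M else 0)) := by
        congr 1
        apply Finset.sum_congr rfl
        intro x _
        rw [← Finset.mul_sum, innerSum x S R hR]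
    _ = (2 ^ n : ℝ)⁻¹ * ∑ x : Finset (Fin n),
          (if x ⊆ S then (if f x then (-1 : ℝ) ^ ((x ∩ R).card) else 0) * 2 ^ M else 0) := by
        congr 1
        apply Finset.sum_congr rfl
        intro x _
        by_cases hfx : f x <;> by_cases hxS : x ⊆ S <;> simp [hfx, hxS]
    _ = (2 ^ n : ℝ)⁻¹ * ∑ x ∈ S.powerset,
          (if f x then (-1 : ℝ) ^ ((x ∩ R).card) else 0) * 2 ^ M := by
        congr 1
        rw [← Finset.sum_filter]
        apply Finset.sum_congr _ (fun _ _ => rfl)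
        ext x
        simp
    _ = (2 ^ n : ℝ)⁻¹ * (2 : ℝ) ^ M *
          ∑ x ∈ S.powerset, (if f x then (-1 : ℝ) ^ ((x ∩ R).card) else 0) := by
        rw [← Finset.sum_mul]; ring


/-- **Bernasconi–Codenotti.** For non-zero `f`, with `c2` the coefficients of
its F2 multilinear representation: `deg_F2(f) ≤ log₂ |supp(f̂)|`. -/
theorem stmt9 (n : ℕ) (f : Finset (Fin n) → Bool) (hf : ∃ x, f x = true)
    (c2 : Finset (Fin n) → ZMod 2)
    (h2 : ∀ T : Finset (Fin n), (if f T then (1 : ZMod 2) else 0) = ∑ S ∈ T.powerset, c2 S) :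
    (polyDeg c2 : ℝ) ≤
      Real.logb 2 ({S : Finset (Fin n) | boolFourierCoeff f S ≠ 0}.ncard : ℝ) := by
  classical
  -- the degree is attained
  have hne : {d | ∃ S : Finset (Fin n), S.card = d ∧ c2 S ≠ 0}.Nonempty := by
    by_contra h
    rw [Set.not_nonempty_iff_eq_empty] at h
    have hall : ∀ S : Finset (Fin n), c2 S = 0 := by
      intro S
      by_contra hc
      exact Set.eq_empty_iff_forall_notMem.mp h S.card ⟨S, rfl, hc⟩
    obtain ⟨x, hx⟩ := hf
    have := h2 x
    simp [hx, hall] at this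
  have hbdd : BddAbove {d | ∃ S : Finset (Fin n), S.card = d ∧ c2 S ≠ 0} := by
    refine ⟨n, fun d hd => ?_⟩
    obtain ⟨S, hS, _⟩ := hd
    rw [← hS]
    simpa using Finset.card_le_univ S
  have hmem := Nat.sSup_mem hne hbdd
  obtain ⟨S, hScard, hSne⟩ := hmem
  set d := polyDeg c2 with hd
  have hScard' : S.card = d := hScard
  -- parity
  have hpar : ∑ T ∈ S.powerset, (if f T then (1 : ZMod 2) else 0) = c2 S :=
    mobius _ c2 h2 S
  -- for each R ⊆ S, find T in the Fourier support with T ∩ S = R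
  have hex : ∀ R, R ⊆ S → ∃ T, T ∩ S = R ∧ boolFourierCoeff f T ≠ 0 := by
    intro R hR
    have hNR : (∑ x ∈ S.powerset, (if f x then ((-1 : ℤ) ^ ((x ∩ R).card)) else 0)) ≠ 0 := by
      intro h0
      have : ((∑ x ∈ S.powerset, (if f x then ((-1 : ℤ) ^ ((x ∩ R).card)) else 0) : ℤ) :
          ZMod 2) = 0 := by rw [h0]; simp
      rw [Int.cast_sum] at this
      have heq : ∀ x ∈ S.powerset,
          (((if f x then ((-1 : ℤ) ^ ((x ∩ R).card)) else 0) : ℤ) : ZMod 2) =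
            (if f x then (1 : ZMod 2) else 0) := by
        intro x _
        by_cases hfx : f x <;> simp [hfx, CharTwo.neg_eq]
      rw [Finset.sum_congr rfl heq, hpar] at this
      exact hSne this
    have hreal : (∑ x ∈ S.powerset, (if f x then ((-1 : ℝ) ^ ((x ∩ R).card)) else 0)) ≠ 0 := by
      have : (∑ x ∈ S.powerset, (if f x then ((-1 : ℝ) ^ ((x ∩ R).card)) else 0)) =
          ((∑ x ∈ S.powerset, (if f x then ((-1 : ℤ) ^ ((x ∩ R).card)) else 0) : ℤ) : ℝ) := by
        rw [Int.cast_sum]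
        apply Finset.sum_congr rfl
        intro x _
        by_cases hfx : f x <;> simp [hfx]
      rw [this]
      exact_mod_cast hNR
    have hsum : ∑ T ∈ univ.filter (fun T => T ∩ S = R), boolFourierCoeff f T ≠ 0 := by
      rw [keySum f S R hR]
      exact mul_ne_zero (mul_ne_zero (by positivity) (by positivity)) hreal
    obtain ⟨T, hT1, hT2⟩ := Finset.exists_ne_zero_of_sum_ne_zero hsum
    exact ⟨T, (Finset.mem_filter.mp hT1).2, hT2⟩
  -- build an injection from powerset of S into the support
  set t := univ.filter (fun T : Finset (Fin n) => boolFourierCoeff f T ≠ 0) with ht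
  have hcard : S.powerset.card ≤ t.card := by
    have hexd : ∀ R : Finset (Fin n), ∃ T, R ⊆ S → (T ∩ S = R ∧ boolFourierCoeff f T ≠ 0) := by
      intro R
      by_cases hR : R ⊆ S
      · obtain ⟨T, hT⟩ := hex R hR
        exact ⟨T, fun _ => hT⟩
      · exact ⟨∅, fun h => absurd h hR⟩
    choose F hF using hexd
    apply Finset.card_le_card_of_injOn F
    · intro R hR
      rw [Finset.mem_coe] at hR ⊢
      rw [Finset.mem_powerset] at hR
      rw [ht, Finset.mem_filter]
      exact ⟨Finset.mem_univ _, (hF R hR).2⟩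
    · intro R1 h1 R2 h2 heq
      rw [Finset.mem_coe, Finset.mem_powerset] at h1 h2
      rw [← (hF R1 h1).1, ← (hF R2 h2).1, heq]
  -- conclude
  have hpow : (2 : ℕ) ^ d ≤ t.card := by
    rw [← hScard', ← Finset.card_powerset]
    exact hcard
  have hset : {S : Finset (Fin n) | boolFourierCoeff f S ≠ 0} = ↑t := by
    ext T; simp [ht]
  rw [hset, Set.ncard_coe_finset]
  have h1 : (d : ℝ) = Real.logb 2 ((2 : ℝ) ^ d) := by
    rw [Real.logb_pow, Real.logb_self_eq_one (by norm_num : (1:ℝ) < 2), mul_one]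
  rw [h1]
  apply Real.logb_le_logb_of_le (by norm_num : (1:ℝ) < 2) (by positivity)
  exact_mod_cast hpow
end

section
/- Let f : {0,1}^n → ℝ be a non-zero function whose unique multilinear polynomial representation has degree at most d* ≤ n. Then |{x ∈ {0,1}^n : f(x) ≠ 0}| ≥ 2^{n - d*}. -/
open Finset

lemma sumPowersetUnion {n : ℕ} (V W : Finset (Fin n)) (h : Disjoint V W)
    (c : Finset (Fin n) → ℝ) :
    ∑ S ∈ (V ∪ W).powerset, c S = ∑ A ∈ V.powerset, ∑ B ∈ W.powerset, c (A ∪ B) := by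
  rw [← Finset.sum_product']
  apply Finset.sum_nbij' (i := fun S => (S ∩ V, S ∩ W)) (j := fun p => p.1 ∪ p.2)
  · intro S hS
    simp only [Finset.mem_product, Finset.mem_powerset]
    exact ⟨Finset.inter_subset_right, Finset.inter_subset_right⟩
  · intro p hp
    simp only [Finset.mem_product, Finset.mem_powerset] at hp ⊢
    exact Finset.union_subset_union hp.1 hp.2
  · intro S hS
    simp only [Finset.mem_powerset] at hS
    rw [← Finset.inter_union_distrib_left, Finset.inter_eq_left.2 hS]
  · intro p hp
    simp only [Finset.mem_product, Finset.mem_powerset] at hp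
    have h1 : Disjoint p.1 W := h.symm.mono_right hp.1 |>.symm
    have h2 : Disjoint p.2 V := h.mono_right hp.2 |>.symm
    ext1 <;> simp only
    · rw [Finset.union_inter_distrib_right, Finset.inter_eq_left.2 hp.1,
        (Finset.disjoint_iff_inter_eq_empty.1 h2), Finset.union_empty]
    · rw [Finset.union_inter_distrib_right, (Finset.disjoint_iff_inter_eq_empty.1 h1),
        Finset.inter_eq_left.2 hp.2, Finset.empty_union]
  · intro S hS
    rw [Finset.mem_powerset] at hS
    simp only
    rw [← Finset.inter_union_distrib_left, Finset.inter_eq_left.2 hS]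

lemma inversion_s10 {n : ℕ} (A : Finset (Fin n)) (g : Finset (Fin n) → ℝ) :
    ∑ V ∈ A.powerset, (-1 : ℝ) ^ (A.card - V.card) * ∑ S ∈ V.powerset, g S = g A := by
  have key : ∀ V ∈ A.powerset, (-1 : ℝ) ^ (A.card - V.card) * ∑ S ∈ V.powerset, g S
      = ∑ S ∈ A.powerset, if S ⊆ V then (-1 : ℝ) ^ (A.card - V.card) * g S else 0 := by
    intro V hV
    rw [Finset.mem_powerset] at hV
    rw [Finset.mul_sum, ← Finset.sum_filter]
    congr 1
    ext S
    simp only [Finset.mem_powerset, Finset.mem_filter]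
    constructor
    · intro h; exact ⟨h.trans hV, h⟩
    · intro h; exact h.2
  rw [Finset.sum_congr rfl key, Finset.sum_comm]
  have inner : ∀ S ∈ A.powerset,
      (∑ V ∈ A.powerset, if S ⊆ V then (-1 : ℝ) ^ (A.card - V.card) * g S else 0)
      = (if A \ S = ∅ then 1 else 0) * g S := by
    intro S hS
    rw [Finset.mem_powerset] at hS
    rw [← Finset.sum_filter]
    have hbij : ∑ V ∈ (A.powerset.filter (fun V => S ⊆ V)),
        (-1 : ℝ) ^ (A.card - V.card) * g S
        = ∑ U ∈ (A \ S).powerset, (-1 : ℝ) ^ U.card * g S := by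
      apply Finset.sum_nbij' (i := fun V => A \ V) (j := fun U => A \ U)
      · intro V hV
        simp only [Finset.mem_filter, Finset.mem_powerset] at hV ⊢
        exact Finset.sdiff_subset_sdiff (le_refl A) hV.2
      · intro U hU
        simp only [Finset.mem_powerset, Finset.mem_filter] at hU ⊢
        constructor
        · exact Finset.sdiff_subset
        · refine Finset.subset_sdiff.2 ⟨hS, ?_⟩
          exact ((Finset.sdiff_disjoint (s := S) (t := A)).mono_left hU).symm
      · intro V hV
        simp only [Finset.mem_filter, Finset.mem_powerset] at hV
        exact Finset.sdiff_sdiff_eq_self hV.1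
      · intro U hU
        simp only [Finset.mem_powerset] at hU
        exact Finset.sdiff_sdiff_eq_self (hU.trans Finset.sdiff_subset)
      · intro V hV
        simp only [Finset.mem_filter, Finset.mem_powerset] at hV
        congr 2
        rw [Finset.card_sdiff_of_subset hV.1]
    rw [hbij, ← Finset.sum_mul]
    congr 1
    have hz := Finset.sum_powerset_neg_one_pow_card (x := A \ S)
    have := congrArg (Int.cast : ℤ → ℝ) hz
    push_cast at this
    exact this
  rw [Finset.sum_congr rfl inner]
  rw [Finset.sum_eq_single A]
  · simp
  · intro S hS hne
    rw [Finset.mem_powerset] at hS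
    have : A \ S ≠ ∅ := fun h =>
      hne (le_antisymm hS (Finset.sdiff_eq_empty_iff_subset.1 h))
    simp [this]
  · intro h
    exact absurd (Finset.mem_powerset.2 (le_refl A)) h

/-- **Schwartz–Zippel on the hypercube.** A non-zero `f : {0,1}^n → ℝ` whose
multilinear representation has degree at most `d ≤ n` has at least `2^(n-d)` non-zeroes. -/
theorem stmt10 (n d : ℕ) (hd : d ≤ n) (f : Finset (Fin n) → ℝ) (hf : ∃ x, f x ≠ 0)
    (c : Finset (Fin n) → ℝ)
    (hc : ∀ T : Finset (Fin n), f T = ∑ S ∈ T.powerset, c S)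
    (hdeg : polyDeg c ≤ d) :
    2 ^ (n - d) ≤ (Finset.univ.filter fun x => f x ≠ 0).card := by
  classical
  -- some coefficient is nonzero
  have hcne : (Finset.univ.filter (fun S : Finset (Fin n) => c S ≠ 0)).Nonempty := by
    by_contra h
    rw [Finset.not_nonempty_iff_eq_empty, Finset.filter_eq_empty_iff] at h
    obtain ⟨x, hx⟩ := hf
    apply hx
    rw [hc]
    apply Finset.sum_eq_zero
    intro S hS
    by_contra hcS
    exact h (Finset.mem_univ S) hcS
  obtain ⟨S₀, hS₀mem, hS₀max⟩ :=
    Finset.exists_max_image _ (fun S : Finset (Fin n) => S.card) hcne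
  rw [Finset.mem_filter] at hS₀mem
  have hcS₀ : c S₀ ≠ 0 := hS₀mem.2
  have hmax : ∀ S : Finset (Fin n), c S ≠ 0 → S.card ≤ S₀.card := by
    intro S hS
    exact hS₀max S (Finset.mem_filter.2 ⟨Finset.mem_univ S, hS⟩)
  -- card S₀ ≤ d
  have hcard : S₀.card ≤ d := by
    refine le_trans ?_ hdeg
    apply le_csSup
    · refine ⟨n, ?_⟩
      rintro k ⟨S, rfl, -⟩
      simpa using Finset.card_le_card (Finset.subset_univ S)
    · exact ⟨S₀, rfl, hcS₀⟩
  -- key claim: every subcube indexed by W ⊆ S₀ᶜ contains a nonzero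
  have key : ∀ W ∈ (S₀ᶜ).powerset, ∃ U : Finset (Fin n), f U ≠ 0 ∧ U \ S₀ = W := by
    intro W hW
    rw [Finset.mem_powerset] at hW
    have hdisj : Disjoint S₀ W := by
      rw [Finset.disjoint_left]
      intro a ha haW
      exact (Finset.mem_compl.1 (hW haW)) ha
    have hsum : ∑ V ∈ S₀.powerset, (-1 : ℝ) ^ (S₀.card - V.card) * f (V ∪ W) = c S₀ := by
      have step : ∀ V ∈ S₀.powerset, f (V ∪ W)
          = ∑ A ∈ V.powerset, ∑ B ∈ W.powerset, c (A ∪ B) := by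
        intro V hV
        rw [Finset.mem_powerset] at hV
        rw [hc, sumPowersetUnion V W (hdisj.mono_left hV)]
      rw [Finset.sum_congr rfl (fun V hV => by rw [step V hV])]
      rw [inversion_s10 S₀ (fun A => ∑ B ∈ W.powerset, c (A ∪ B))]
      rw [Finset.sum_eq_single ∅]
      · rw [Finset.union_empty]
      · intro B hB hBne
        apply not_ne_iff.1
        intro hcB
        have := hmax _ hcB
        rw [Finset.card_union_of_disjoint
          (hdisj.mono_right (Finset.mem_powerset.1 hB))] at this
        have hBpos : 0 < B.card := Finset.card_pos.2 (Finset.nonempty_iff_ne_empty.2 hBne)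
        omega
      · intro h
        exact absurd (Finset.mem_powerset.2 (Finset.empty_subset W)) h
    have : ∃ V ∈ S₀.powerset, f (V ∪ W) ≠ 0 := by
      by_contra h
      push_neg at h
      rw [Finset.sum_eq_zero (fun V hV => by rw [h V hV, mul_zero])] at hsum
      exact hcS₀ hsum.symm
    obtain ⟨V, hV, hfV⟩ := this
    rw [Finset.mem_powerset] at hV
    refine ⟨V ∪ W, hfV, ?_⟩
    rw [Finset.union_sdiff_distrib, Finset.sdiff_eq_empty_iff_subset.2 hV,
      Finset.empty_union, Finset.sdiff_eq_self_iff_disjoint.2 hdisj.symm]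
  -- choose witnesses and count
  choose u hu1 hu2 using key
  have hinj : Set.InjOn (fun W => if h : W ∈ (S₀ᶜ).powerset then u W h else ∅)
      ↑((S₀ᶜ).powerset) := by
    intro W1 h1 W2 h2 heq
    simp only [Finset.mem_coe] at h1 h2
    simp only [dif_pos h1, dif_pos h2] at heq
    rw [← hu2 W1 h1, ← hu2 W2 h2, heq]
  have hmaps : ∀ W ∈ (S₀ᶜ).powerset,
      (if h : W ∈ (S₀ᶜ).powerset then u W h else ∅) ∈
        (Finset.univ.filter fun x => f x ≠ 0) := by
    intro W hW
    rw [dif_pos hW]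
    exact Finset.mem_filter.2 ⟨Finset.mem_univ _, hu1 W hW⟩
  have hle := Finset.card_le_card_of_injOn _ hmaps hinj
  rw [Finset.card_powerset, Finset.card_compl, Fintype.card_fin] at hle
  refine le_trans ?_ hle
  exact Nat.pow_le_pow_right (by norm_num) (by omega)
end

section
/- Let F ⊆ 2^[n] be a family with VC-dimension at most d ≤ n. Then |F| ≤ Σ_{i=0}^{d} C(n, i). -/
open Finset

lemma shattersFam_iff {α : Type*} [DecidableEq α] (F : Finset (Finset α)) (T : Finset α) :
    ShattersFam F T ↔ F.Shatters T := by
  constructor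
  · intro h U hU
    obtain ⟨A, hA, hAT⟩ := h U hU
    exact ⟨A, hA, by rwa [inter_comm]⟩
  · intro h U hU
    obtain ⟨A, hA, hAT⟩ := h hU
    exact ⟨A, hA, by rwa [inter_comm]⟩

/-- **Sauer–Shelah–Perles lemma.** -/
theorem stmt11 (n d : ℕ) (hd : d ≤ n) (F : Finset (Finset (Fin n))) (h : vcDimFam F ≤ d) :
    F.card ≤ ∑ i ∈ Finset.range (d + 1), n.choose i := by
  have hvc : F.vcDim ≤ d := by
    rw [Finset.vcDim, Finset.sup_le_iff]
    intro s hs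
    rw [mem_shatterer] at hs
    refine le_trans ?_ h
    refine le_csSup ⟨n, ?_⟩ ⟨s, rfl, (shattersFam_iff F s).2 hs⟩
    rintro k ⟨T, rfl, -⟩
    exact (card_le_card (subset_univ T)).trans (by simp)
  calc F.card ≤ F.shatterer.card := F.card_le_card_shatterer
    _ ≤ ∑ k ∈ Iic F.vcDim, (Fintype.card (Fin n)).choose k := card_shatterer_le_sum_vcDim
    _ ≤ ∑ i ∈ Finset.range (d + 1), n.choose i := by
        have : Finset.range (d + 1) = Iic d := by ext; simp [Nat.lt_succ_iff]
        rw [this]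
        simp only [Fintype.card_fin]
        exact Finset.sum_le_sum_of_subset (Iic_subset_Iic.2 hvc)
end

section
/- Let f : {0,1}^n → {0,1} be a non-zero Boolean function. Then VC(f) + D(f) ≥ n, where D(f) is the deterministic decision-tree (query) complexity of f. -/
open Finset

/-- Deterministic decision trees querying coordinates in `Fin n`. -/
inductive DTree (n : ℕ) : Type
  | leaf : Bool → DTree n
  | node : Fin n → DTree n → DTree n → DTree n

/-- Evaluation of a decision tree on an input. -/
def DTree.eval {n : ℕ} : DTree n → (Fin n → Bool) → Bool
  | .leaf b, _ => b
  | .node i t0 t1, x => if x i then DTree.eval t1 x else DTree.eval t0 x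

/-- Depth of a decision tree. -/
def DTree.depth {n : ℕ} : DTree n → ℕ
  | .leaf _ => 0
  | .node _ t0 t1 => max (DTree.depth t0) (DTree.depth t1) + 1

/-- Deterministic decision-tree (query) complexity `D(f)`: the least depth of a decision
tree computing `f` (inputs identified with subsets of `Fin n`). -/
noncomputable def dtComplexity {n : ℕ} (f : Finset (Fin n) → Bool) : ℕ :=
  sInf {k | ∃ t : DTree n, t.depth ≤ k ∧
    ∀ A : Finset (Fin n), t.eval (fun i => decide (i ∈ A)) = f A}

/-- Build a full tree querying all indices in `l`. -/
def buildTree {n : ℕ} (g : (Fin n → Bool) → Bool) : List (Fin n) → (Fin n → Bool) → DTree n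
  | [], y => .leaf (g y)
  | i :: l, y => .node i (buildTree g l (Function.update y i false))
      (buildTree g l (Function.update y i true))

lemma buildTree_depth {n : ℕ} (g : (Fin n → Bool) → Bool) (l : List (Fin n))
    (y : Fin n → Bool) : (buildTree g l y).depth = l.length := by
  induction l generalizing y with
  | nil => rfl
  | cons i l ih => simp [buildTree, DTree.depth, ih]

lemma buildTree_eval {n : ℕ} (g : (Fin n → Bool) → Bool) (l : List (Fin n))
    (y x : Fin n → Bool) :
    (buildTree g l y).eval x = g (fun i => if i ∈ l then x i else y i) := by
  induction l generalizing y with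
  | nil => simp [buildTree, DTree.eval]
  | cons i l ih =>
    simp only [buildTree, DTree.eval]
    by_cases hx : x i
    · rw [if_pos hx, ih]
      congr 1
      funext j
      by_cases hj : j ∈ l
      · simp [hj]
      · by_cases hji : j = i
        · subst hji; simp [hj, hx, Function.update]
        · simp [hj, hji, Function.update]
    · rw [if_neg hx, ih]
      congr 1
      funext j
      by_cases hj : j ∈ l
      · simp [hj]
      · by_cases hji : j = i
        · subst hji
          simp only [Bool.not_eq_true] at hx
          simp [hj, hx, Function.update]
        · simp [hj, hji, Function.update]

/-- Every function is computed by some tree of depth `n`. -/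
lemma exists_tree {n : ℕ} (f : Finset (Fin n) → Bool) :
    ∃ t : DTree n, t.depth ≤ n ∧
      ∀ A : Finset (Fin n), t.eval (fun i => decide (i ∈ A)) = f A := by
  refine ⟨buildTree (fun x => f (Finset.univ.filter fun i => x i = true))
    (List.finRange n) (fun _ => false), ?_, ?_⟩
  · rw [buildTree_depth]; simp
  · intro A
    rw [buildTree_eval]
    congr 1
    ext i
    simp [List.mem_finRange]

/-- Along the path of `x`, at most `depth` variables are queried; any input
agreeing on them evaluates the same. -/
lemma path_lemma {n : ℕ} (t : DTree n) (x : Fin n → Bool) :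
    ∃ Q : Finset (Fin n), Q.card ≤ t.depth ∧
      ∀ y : Fin n → Bool, (∀ i ∈ Q, y i = x i) → t.eval y = t.eval x := by
  induction t with
  | leaf b => exact ⟨∅, by simp [DTree.depth], fun y _ => rfl⟩
  | node i t0 t1 ih0 ih1 =>
    by_cases hx : x i
    · obtain ⟨Q, hQc, hQ⟩ := ih1
      refine ⟨insert i Q, ?_, ?_⟩
      · calc (insert i Q).card ≤ Q.card + 1 := Finset.card_insert_le _ _
          _ ≤ max t0.depth t1.depth + 1 := by
              have := hQc; omega
      · intro y hy
        have hyi : y i = x i := hy i (Finset.mem_insert_self _ _)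
        simp only [DTree.eval, hyi, hx, if_pos]
        exact hQ y fun j hj => hy j (Finset.mem_insert_of_mem hj)
    · obtain ⟨Q, hQc, hQ⟩ := ih0
      refine ⟨insert i Q, ?_, ?_⟩
      · calc (insert i Q).card ≤ Q.card + 1 := Finset.card_insert_le _ _
          _ ≤ max t0.depth t1.depth + 1 := by
              have := hQc; omega
      · intro y hy
        have hyi : y i = x i := hy i (Finset.mem_insert_self _ _)
        simp only [Bool.not_eq_true] at hx
        simp only [DTree.eval, hyi, hx, if_neg, Bool.false_eq_true, not_false_iff]
        exact hQ y fun j hj => hy j (Finset.mem_insert_of_mem hj)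

/-- For non-zero `f : {0,1}^n → {0,1}`, `VC(f) + D(f) ≥ n`. -/
theorem stmt14 (n : ℕ) (f : Finset (Fin n) → Bool) (hf : ∃ x, f x = true) :
    n ≤ vcDimFam (Finset.univ.filter fun A => f A = true) + dtComplexity f := by
  obtain ⟨x, hx⟩ := hf
  set S := {k | ∃ t : DTree n, t.depth ≤ k ∧
    ∀ A : Finset (Fin n), t.eval (fun i => decide (i ∈ A)) = f A} with hS
  have hne : S.Nonempty := ⟨n, exists_tree f⟩
  have hmem : dtComplexity f ∈ S := Nat.sInf_mem hne
  obtain ⟨t, htd, hteval⟩ := hmem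
  obtain ⟨Q, hQc, hQ⟩ := path_lemma t (fun i => decide (i ∈ x))
  set T := Finset.univ \ Q with hT
  -- T is shattered
  have hshat : ShattersFam (Finset.univ.filter fun A => f A = true) T := by
    intro U hU
    refine ⟨(x ∩ Q) ∪ U, ?_, ?_⟩
    · rw [Finset.mem_filter]
      refine ⟨Finset.mem_univ _, ?_⟩
      rw [← hteval]
      have := hQ (fun i => decide (i ∈ (x ∩ Q) ∪ U)) ?_
      · rw [this, hteval, hx]
      · intro i hi
        have hiU : i ∉ U := fun h => by
          have := hU h
          rw [hT, Finset.mem_sdiff] at this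
          exact this.2 hi
        simp [Finset.mem_union, Finset.mem_inter, hi, hiU]
    · rw [Finset.union_inter_distrib_right]
      have h1 : (x ∩ Q) ∩ T = ∅ := by
        rw [hT]
        ext j
        simp only [Finset.mem_inter, Finset.mem_sdiff, Finset.mem_univ, true_and,
          Finset.notMem_empty, iff_false]
        tauto
      have h2 : U ∩ T = U := Finset.inter_eq_left.mpr hU
      rw [h1, h2, Finset.empty_union]
  -- VC dim at least card T
  have hbdd : BddAbove {d | ∃ T' : Finset (Fin n), T'.card = d ∧
      ShattersFam (Finset.univ.filter fun A => f A = true) T'} := by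
    refine ⟨n, fun d hd => ?_⟩
    obtain ⟨T', hT', _⟩ := hd
    rw [← hT']
    simpa using Finset.card_le_card (Finset.subset_univ T')
  have hvc : T.card ≤ vcDimFam (Finset.univ.filter fun A => f A = true) :=
    le_csSup hbdd ⟨T, rfl, hshat⟩
  have hTcard : T.card = n - Q.card := by
    rw [hT, Finset.card_sdiff_of_subset (Finset.subset_univ Q)]
    simp
  have hQn : Q.card ≤ n := by simpa using Finset.card_le_card (Finset.subset_univ Q)
  have hd : Q.card ≤ dtComplexity f := le_trans hQc htd
  omega
end

section
/- Let V ⊆ {0,1}^n be non-empty and let G = (V, E) be the subgraph of the hypercube Q_n induced on V. Then |E| / |V| ≤ VC(V), where VC(V) is the VC-dimension of V viewed as a family of subsets of [n]. -/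
open Finset

open scoped symmDiff

namespace HLWaux

variable {α : Type*} [DecidableEq α]

def vcSet (F : Finset (Finset α)) : Set ℕ := {d | ∃ T : Finset α, T.card = d ∧ ShattersFam F T}

lemma vcDimFam_eq (F : Finset (Finset α)) : vcDimFam F = sSup (vcSet F) := rfl

lemma zero_mem_vcSet {F : Finset (Finset α)} (hF : F.Nonempty) : 0 ∈ vcSet F := by
  obtain ⟨A, hA⟩ := hF
  exact ⟨∅, rfl, fun U hU => ⟨A, hA, by simp [Finset.subset_empty.mp hU]⟩⟩

lemma shatters_subset {F : Finset (Finset α)} {S T : Finset α} (hS : ∀ A ∈ F, A ⊆ S)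
    (hT : ShattersFam F T) : T ⊆ S := by
  obtain ⟨A, hA, hAT⟩ := hT T subset_rfl
  calc T = A ∩ T := hAT.symm
  _ ⊆ A := inter_subset_left
  _ ⊆ S := hS A hA

lemma bddAbove_vcSet {F : Finset (Finset α)} {S : Finset α} (hS : ∀ A ∈ F, A ⊆ S) :
    BddAbove (vcSet F) :=
  ⟨S.card, fun _ ⟨T, hTc, hT⟩ => hTc ▸ card_le_card (shatters_subset hS hT)⟩

/-- symmDiff is unchanged by erasing a point present in (or absent from) both sets. -/
lemma symmDiff_erase {a : α} {A B : Finset α} (h : (a ∈ A ↔ a ∈ B)) :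
    A.erase a ∆ B.erase a = A ∆ B := by
  ext x
  by_cases hx : x = a
  · subst hx; simp [Finset.mem_symmDiff, Finset.mem_erase]; tauto
  · simp [Finset.mem_symmDiff, Finset.mem_erase, hx]

lemma eq_singleton_of_card_one {a : α} {A B : Finset α} (hcard : (A ∆ B).card = 1)
    (ha : a ∈ A ∆ B) : A ∆ B = {a} := by
  obtain ⟨x, hx⟩ := Finset.card_eq_one.mp hcard
  rw [hx] at ha ⊢
  simp_all

lemma eq_erase_of_symmDiff {a : α} {A B : Finset α} (hcard : (A ∆ B).card = 1)
    (haA : a ∈ A) (haB : a ∉ B) : B = A.erase a := by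
  have hs : A ∆ B = {a} := eq_singleton_of_card_one hcard (by simp [Finset.mem_symmDiff, haA, haB])
  ext x
  by_cases hx : x = a
  · subst hx; simp [haB]
  · have h2 : (x ∈ A ∆ B) ↔ (x ∈ ({a} : Finset α)) := by rw [hs]
    simp only [Finset.mem_symmDiff, Finset.mem_singleton, hx, iff_false] at h2
    simp only [Finset.mem_erase, hx, true_and]
    tauto

lemma eq_insert_of_symmDiff {a : α} {A B : Finset α} (hcard : (A ∆ B).card = 1)
    (haA : a ∈ A) (haB : a ∉ B) : A = insert a B := by
  have h := eq_erase_of_symmDiff hcard haA haB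
  rw [h, Finset.insert_erase haA]

lemma insert_symmDiff_self {a : α} {w : Finset α} (h : a ∉ w) : (insert a w) ∆ w = {a} := by
  ext x
  by_cases hx : x = a
  · subst hx; simp [Finset.mem_symmDiff, h]
  · simp [Finset.mem_symmDiff, hx]

theorem main (S : Finset α) : ∀ V : Finset (Finset α), (∀ A ∈ V, A ⊆ S) → V.Nonempty →
    ((V ×ˢ V).filter fun p => (p.1 ∆ p.2).card = 1).card ≤ 2 * vcDimFam V * V.card := by
  classical
  induction S using Finset.induction_on with
  | empty =>
    intro V hVS _
    have : ((V ×ˢ V).filter fun p => (p.1 ∆ p.2).card = 1) = ∅ := by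
      apply Finset.filter_eq_empty_iff.mpr
      rintro ⟨A, B⟩ hp
      simp only [Finset.mem_product] at hp
      have hA : A = ∅ := Finset.subset_empty.mp (hVS A hp.1)
      have hB : B = ∅ := Finset.subset_empty.mp (hVS B hp.2)
      simp [hA, hB]
    simp [this]
  | @insert a s ha ih =>
    intro V hVS hV
    set V0 : Finset (Finset α) := V.filter (fun A => a ∉ A) with hV0def
    set Vin : Finset (Finset α) := V.filter (fun A => a ∈ A) with hVindef
    set V1 : Finset (Finset α) := Vin.image (fun A => A.erase a) with hV1def
    set P : Finset (Finset α) := V0 ∪ V1 with hPdef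
    set W : Finset (Finset α) := V0 ∩ V1 with hWdef
    -- membership lemmas
    have hmemV0 : ∀ B : Finset α, B ∈ V0 ↔ B ∈ V ∧ a ∉ B := by
      intro B; simp [hV0def, Finset.mem_filter]
    have hmemV1 : ∀ B : Finset α, B ∈ V1 ↔ a ∉ B ∧ insert a B ∈ V := by
      intro B
      simp only [hV1def, Finset.mem_image, hVindef, Finset.mem_filter]
      constructor
      · rintro ⟨C, ⟨hCV, haC⟩, rfl⟩
        exact ⟨Finset.notMem_erase a C, by rwa [Finset.insert_erase haC]⟩
      · rintro ⟨haB, hBV⟩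
        exact ⟨insert a B, ⟨hBV, Finset.mem_insert_self a B⟩, Finset.erase_insert haB⟩
    have hmemW : ∀ B : Finset α, B ∈ W ↔ B ∈ V ∧ a ∉ B ∧ insert a B ∈ V := by
      intro B
      rw [hWdef, Finset.mem_inter, hmemV0, hmemV1]
      tauto
    -- subset bounds
    have hV0S : ∀ A ∈ V0, A ⊆ s := by
      intro A hA
      rw [hmemV0] at hA
      intro x hx
      rcases Finset.mem_insert.mp (hVS A hA.1 hx) with h | h
      · exact absurd (h ▸ hx) hA.2
      · exact h
    have hV1S : ∀ A ∈ V1, A ⊆ s := by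
      intro A hA
      rw [hmemV1] at hA
      intro x hx
      have hx' : x ∈ insert a s := hVS _ hA.2 (Finset.mem_insert_of_mem hx)
      rcases Finset.mem_insert.mp hx' with h | h
      · exact absurd (h ▸ hx) hA.1
      · exact h
    have hPS : ∀ A ∈ P, A ⊆ s := by
      intro A hA
      rcases Finset.mem_union.mp hA with h | h
      · exact hV0S A h
      · exact hV1S A h
    have hWS : ∀ A ∈ W, A ⊆ s := fun A hA => hV0S A (Finset.mem_inter.mp hA).1
    have hPne : P.Nonempty := by
      obtain ⟨A, hA⟩ := hV
      by_cases haA : a ∈ A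
      · exact ⟨A.erase a, Finset.mem_union_right _ ((hmemV1 _).mpr
          ⟨Finset.notMem_erase a A, by rwa [Finset.insert_erase haA]⟩)⟩
      · exact ⟨A, Finset.mem_union_left _ ((hmemV0 _).mpr ⟨hA, haA⟩)⟩
    -- cardinality: |V| = |P| + |W|
    have hcardV1 : V1.card = Vin.card := by
      apply Finset.card_image_of_injOn
      intro A hA B hB hAB
      have haA : a ∈ A := (Finset.mem_filter.mp hA).2
      have haB : a ∈ B := (Finset.mem_filter.mp hB).2
      have h := congrArg (insert a) hAB
      simpa [Finset.insert_erase haA, Finset.insert_erase haB] using h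
    have hcardV : V.card = P.card + W.card := by
      have h1 : Vin.card + V0.card = V.card :=
        Finset.card_filter_add_card_filter_not (s := V) (p := fun A => a ∈ A)
      have h2 : P.card + W.card = V0.card + V1.card :=
        Finset.card_union_add_card_inter V0 V1
      omega
    -- vc bounds
    have hvcP : vcDimFam P ≤ vcDimFam V := by
      rw [vcDimFam_eq, vcDimFam_eq]
      apply csSup_le ⟨0, zero_mem_vcSet hPne⟩
      rintro d ⟨T, hTc, hT⟩
      have haT : a ∉ T := fun h => ha (shatters_subset hPS hT h)
      apply le_csSup (bddAbove_vcSet hVS)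
      refine ⟨T, hTc, fun U hU => ?_⟩
      obtain ⟨B, hB, hBT⟩ := hT U hU
      rcases Finset.mem_union.mp hB with h | h
      · exact ⟨B, ((hmemV0 B).mp h).1, hBT⟩
      · obtain ⟨haB, hiB⟩ := (hmemV1 B).mp h
        exact ⟨insert a B, hiB, by rwa [Finset.insert_inter_of_notMem haT]⟩
    have hvcW : W.Nonempty → vcDimFam W + 1 ≤ vcDimFam V := by
      intro hWne
      have hmem : vcDimFam W ∈ vcSet W :=
        Nat.sSup_mem ⟨0, zero_mem_vcSet hWne⟩ (bddAbove_vcSet hWS)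
      obtain ⟨T, hTc, hT⟩ := hmem
      have haT : a ∉ T := fun h => ha (shatters_subset hWS hT h)
      show vcDimFam W + 1 ≤ sSup (vcSet V)
      apply le_csSup (bddAbove_vcSet hVS)
      refine ⟨insert a T, by rw [Finset.card_insert_of_notMem haT, hTc], fun U hU => ?_⟩
      have hU' : U.erase a ⊆ T := by
        intro x hx
        have hx1 := Finset.mem_erase.mp hx
        rcases Finset.mem_insert.mp (hU hx1.2) with h | h
        · exact absurd h hx1.1
        · exact h
      obtain ⟨B, hBW, hBT⟩ := hT (U.erase a) hU'
      obtain ⟨hBV, haB, hiB⟩ := (hmemW B).mp hBW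
      by_cases hau : a ∈ U
      · refine ⟨insert a B, hiB, ?_⟩
        rw [Finset.insert_inter_of_mem (Finset.mem_insert_self a T),
          Finset.inter_insert_of_notMem haB, hBT, Finset.insert_erase hau]
      · refine ⟨B, hBV, ?_⟩
        rw [Finset.inter_insert_of_notMem haB, hBT, Finset.erase_eq_of_notMem hau]
    -- edge decomposition
    set cond : Finset α × Finset α → Prop := fun p => (p.1 ∆ p.2).card = 1 with hconddef
    set EV := (V ×ˢ V).filter cond with hEVdef
    set E11 := EV.filter (fun p => a ∈ p.1 ∧ a ∈ p.2) with hE11def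
    set E10 := EV.filter (fun p => a ∈ p.1 ∧ a ∉ p.2) with hE10def
    set E01 := EV.filter (fun p => a ∉ p.1 ∧ a ∈ p.2) with hE01def
    set E00 := EV.filter (fun p => a ∉ p.1 ∧ a ∉ p.2) with hE00def
    have hmemEV : ∀ p : Finset α × Finset α, p ∈ EV ↔ p.1 ∈ V ∧ p.2 ∈ V ∧ cond p := by
      intro p; simp [hEVdef, Finset.mem_filter, Finset.mem_product, and_assoc]
    have hsplit : EV.card = E11.card + E10.card + (E01.card + E00.card) := by
      have h1 : (EV.filter (fun p => a ∈ p.1)).card + (EV.filter (fun p => ¬ a ∈ p.1)).card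
          = EV.card := Finset.card_filter_add_card_filter_not _
      have h2 : ((EV.filter (fun p => a ∈ p.1)).filter (fun p => a ∈ p.2)).card
          + ((EV.filter (fun p => a ∈ p.1)).filter (fun p => ¬ a ∈ p.2)).card
          = (EV.filter (fun p => a ∈ p.1)).card :=
        Finset.card_filter_add_card_filter_not _
      have h3 : ((EV.filter (fun p => ¬ a ∈ p.1)).filter (fun p => a ∈ p.2)).card
          + ((EV.filter (fun p => ¬ a ∈ p.1)).filter (fun p => ¬ a ∈ p.2)).card
          = (EV.filter (fun p => ¬ a ∈ p.1)).card :=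
        Finset.card_filter_add_card_filter_not _
      rw [hE11def, hE10def, hE01def, hE00def]
      rw [← Finset.filter_filter, ← Finset.filter_filter, ← Finset.filter_filter,
        ← Finset.filter_filter]
      omega
    -- E00 = edges of V0
    have hE00card : E00.card = ((V0 ×ˢ V0).filter cond).card := by
      congr 1
      ext p
      simp only [hE00def, Finset.mem_filter, hmemEV, Finset.mem_product, hmemV0]
      tauto
    -- E11 ↔ edges of V1
    have hE11card : E11.card = ((V1 ×ˢ V1).filter cond).card := by
      apply Finset.card_nbij (fun p => (p.1.erase a, p.2.erase a))
      · rintro ⟨A, B⟩ hp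
        have hp : (A, B) ∈ E11 := hp; simp only [hE11def, Finset.mem_filter, hmemEV] at hp
        obtain ⟨⟨hAV, hBV, hcond⟩, haA, haB⟩ := hp
        show (A.erase a, B.erase a) ∈ (V1 ×ˢ V1).filter cond; simp only [Finset.mem_filter, Finset.mem_product]
        refine ⟨⟨(hmemV1 _).mpr ⟨Finset.notMem_erase a A, by rwa [Finset.insert_erase haA]⟩,
          (hmemV1 _).mpr ⟨Finset.notMem_erase a B, by rwa [Finset.insert_erase haB]⟩⟩, ?_⟩
        show ((A.erase a) ∆ (B.erase a)).card = 1
        rwa [symmDiff_erase (by simp [haA, haB])]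
      · rintro ⟨A, B⟩ hp ⟨C, D⟩ hq hpq
        simp only [Finset.coe_filter, Set.mem_setOf_eq, hE11def, Finset.mem_filter] at hp hq
        have hpq1 : A.erase a = C.erase a := congrArg Prod.fst hpq
        have hpq2 : B.erase a = D.erase a := congrArg Prod.snd hpq
        have h1 : A = C := by
          rw [← Finset.insert_erase hp.2.1, ← Finset.insert_erase hq.2.1, hpq1]
        have h2 : B = D := by
          rw [← Finset.insert_erase hp.2.2, ← Finset.insert_erase hq.2.2, hpq2]
        simp [h1, h2]
      · rintro ⟨C, D⟩ hq
        simp only [Finset.coe_filter, Set.mem_setOf_eq, Finset.mem_product] at hq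
        obtain ⟨⟨hC, hD⟩, hcond⟩ := hq
        obtain ⟨haC, hiC⟩ := (hmemV1 C).mp hC
        obtain ⟨haD, hiD⟩ := (hmemV1 D).mp hD
        refine ⟨(insert a C, insert a D), ?_, ?_⟩
        · simp only [Set.mem_preimage, Finset.mem_coe, hE11def, Finset.mem_filter, hmemEV]
          refine ⟨⟨hiC, hiD, ?_⟩, Finset.mem_insert_self a C, Finset.mem_insert_self a D⟩
          show ((insert a C) ∆ (insert a D)).card = 1
          have := symmDiff_erase (a := a) (A := insert a C) (B := insert a D) (by simp)
          rw [Finset.erase_insert haC, Finset.erase_insert haD] at this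
          rw [← this]
          exact hcond
        · simp [Finset.erase_insert haC, Finset.erase_insert haD]
    -- E10 ↔ W
    have hE10card : E10.card = W.card := by
      apply Finset.card_nbij (fun p => p.2)
      · rintro ⟨A, B⟩ hp
        have hp : (A, B) ∈ E10 := hp; simp only [hE10def, Finset.mem_filter, hmemEV] at hp
        obtain ⟨⟨hAV, hBV, hcond⟩, haA, haB⟩ := hp
        exact (hmemW B).mpr ⟨hBV, haB, by rw [← eq_insert_of_symmDiff hcond haA haB]; exact hAV⟩
      · rintro ⟨A, B⟩ hp ⟨C, D⟩ hq hpq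
        simp only [Finset.coe_filter, Set.mem_setOf_eq, hE10def, Finset.mem_filter, hmemEV] at hp hq
        simp only at hpq
        have h1 : A = insert a B := eq_insert_of_symmDiff hp.1.2.2 hp.2.1 hp.2.2
        have h2 : C = insert a D := eq_insert_of_symmDiff hq.1.2.2 hq.2.1 hq.2.2
        simp [h1, h2, hpq]
      · intro w hw
        simp only [Finset.mem_coe] at hw
        obtain ⟨hwV, haw, hiw⟩ := (hmemW w).mp hw
        refine ⟨(insert a w, w), ?_, rfl⟩
        simp only [Set.mem_preimage, Finset.mem_coe, hE10def, Finset.mem_filter, hmemEV]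
        refine ⟨⟨hiw, hwV, ?_⟩, Finset.mem_insert_self a w, haw⟩
        show ((insert a w) ∆ w).card = 1
        rw [insert_symmDiff_self haw]
        simp
    -- E01 ↔ W
    have hE01card : E01.card = W.card := by
      apply Finset.card_nbij (fun p => p.1)
      · rintro ⟨A, B⟩ hp
        have hp : (A, B) ∈ E01 := hp; simp only [hE01def, Finset.mem_filter, hmemEV] at hp
        obtain ⟨⟨hAV, hBV, hcond⟩, haA, haB⟩ := hp
        have hcond0 : (A ∆ B).card = 1 := hcond
        have hcond' : (B ∆ A).card = 1 := by rw [symmDiff_comm]; exact hcond0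
        exact (hmemW A).mpr ⟨hAV, haA, by rw [← eq_insert_of_symmDiff hcond' haB haA]; exact hBV⟩
      · rintro ⟨A, B⟩ hp ⟨C, D⟩ hq hpq
        simp only [Finset.coe_filter, Set.mem_setOf_eq, hE01def, Finset.mem_filter, hmemEV] at hp hq
        simp only at hpq
        have hp0 : (A ∆ B).card = 1 := hp.1.2.2
        have hq0 : (C ∆ D).card = 1 := hq.1.2.2
        have hp' : (B ∆ A).card = 1 := by rw [symmDiff_comm]; exact hp0
        have hq' : (D ∆ C).card = 1 := by rw [symmDiff_comm]; exact hq0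
        have h1 : B = insert a A := eq_insert_of_symmDiff hp' hp.2.2 hp.2.1
        have h2 : D = insert a C := eq_insert_of_symmDiff hq' hq.2.2 hq.2.1
        simp [h1, h2, hpq]
      · intro w hw
        simp only [Finset.mem_coe] at hw
        obtain ⟨hwV, haw, hiw⟩ := (hmemW w).mp hw
        refine ⟨(w, insert a w), ?_, rfl⟩
        simp only [Set.mem_preimage, Finset.mem_coe, hE01def, Finset.mem_filter, hmemEV]
        refine ⟨⟨hwV, hiw, ?_⟩, haw, Finset.mem_insert_self a w⟩
        show (w ∆ (insert a w)).card = 1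
        rw [symmDiff_comm, insert_symmDiff_self haw]
        simp
    -- edges of V0 + edges of V1 ≤ edges of P + edges of W
    have hsubmod : ((V0 ×ˢ V0).filter cond).card + ((V1 ×ˢ V1).filter cond).card
        ≤ ((P ×ˢ P).filter cond).card + ((W ×ˢ W).filter cond).card := by
      have hprod : (V0 ×ˢ V0) ∩ (V1 ×ˢ V1) = (W ×ˢ W) := by
        ext p
        simp only [Finset.mem_inter, Finset.mem_product, hWdef]
        tauto
      have hint : ((V0 ×ˢ V0).filter cond) ∩ ((V1 ×ˢ V1).filter cond)
          = (W ×ˢ W).filter cond := by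
        rw [← Finset.filter_inter_distrib, hprod]
      have huni : ((V0 ×ˢ V0).filter cond) ∪ ((V1 ×ˢ V1).filter cond) ⊆ (P ×ˢ P).filter cond := by
        apply Finset.union_subset <;>
          exact Finset.filter_subset_filter _ (Finset.product_subset_product
            (by simp [hPdef]) (by simp [hPdef]))
      calc ((V0 ×ˢ V0).filter cond).card + ((V1 ×ˢ V1).filter cond).card
          = (((V0 ×ˢ V0).filter cond) ∪ ((V1 ×ˢ V1).filter cond)).card
            + (((V0 ×ˢ V0).filter cond) ∩ ((V1 ×ˢ V1).filter cond)).card :=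
            (Finset.card_union_add_card_inter _ _).symm
        _ ≤ ((P ×ˢ P).filter cond).card + ((W ×ˢ W).filter cond).card := by
            rw [hint]
            exact Nat.add_le_add_right (Finset.card_le_card huni) _
    -- apply induction hypothesis
    have ihP : ((P ×ˢ P).filter cond).card ≤ 2 * vcDimFam P * P.card := ih P hPS hPne
    -- conclude
    by_cases hWne : W.Nonempty
    · have ihW : ((W ×ˢ W).filter cond).card ≤ 2 * vcDimFam W * W.card := ih W hWS hWne
      have hvcW' := hvcW hWne
      have hWterm : ((W ×ˢ W).filter cond).card + 2 * W.card ≤ 2 * vcDimFam V * W.card := by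
        calc ((W ×ˢ W).filter cond).card + 2 * W.card
            ≤ 2 * vcDimFam W * W.card + 2 * W.card := Nat.add_le_add_right ihW _
          _ = 2 * (vcDimFam W + 1) * W.card := by ring
          _ ≤ 2 * vcDimFam V * W.card := by
              exact Nat.mul_le_mul_right _ (Nat.mul_le_mul_left _ hvcW')
      calc EV.card = E11.card + E10.card + (E01.card + E00.card) := hsplit
        _ = ((V0 ×ˢ V0).filter cond).card + ((V1 ×ˢ V1).filter cond).card + 2 * W.card := by
            rw [hE00card, hE11card, hE10card, hE01card]; ring
        _ ≤ (((P ×ˢ P).filter cond).card + ((W ×ˢ W).filter cond).card) + 2 * W.card :=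
            Nat.add_le_add_right hsubmod _
        _ ≤ 2 * vcDimFam P * P.card + (((W ×ˢ W).filter cond).card + 2 * W.card) := by
            omega
        _ ≤ 2 * vcDimFam V * P.card + 2 * vcDimFam V * W.card :=
            Nat.add_le_add (Nat.mul_le_mul_right _ (Nat.mul_le_mul_left _ hvcP)) hWterm
        _ = 2 * vcDimFam V * V.card := by rw [hcardV]; ring
    · have hWempty : W = ∅ := Finset.not_nonempty_iff_eq_empty.mp hWne
      have hWcard : W.card = 0 := by rw [hWempty]; rfl
      have hWE : ((W ×ˢ W).filter cond).card = 0 := by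
        rw [hWempty]; simp
      calc EV.card = E11.card + E10.card + (E01.card + E00.card) := hsplit
        _ = ((V0 ×ˢ V0).filter cond).card + ((V1 ×ˢ V1).filter cond).card + 2 * W.card := by
            rw [hE00card, hE11card, hE10card, hE01card]; ring
        _ ≤ 2 * vcDimFam P * P.card := by omega
        _ ≤ 2 * vcDimFam V * P.card :=
            Nat.mul_le_mul_right _ (Nat.mul_le_mul_left _ hvcP)
        _ = 2 * vcDimFam V * V.card := by rw [hcardV, hWcard]; ring

end HLWaux

/-- **Haussler–Littlestone–Warmuth edge-density bound.** For non-empty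
`V ⊆ {0,1}^n`, the number of edges of the induced subgraph of the hypercube satisfies
`|E| ≤ VC(V) * |V|`. Here edges are counted as ordered pairs (each edge twice), so the
statement reads `#orderedEdges ≤ 2 * VC(V) * |V|`, i.e. `|E|/|V| ≤ VC(V)`. -/
theorem stmt16 (n : ℕ) (V : Finset (Finset (Fin n))) (hV : V.Nonempty) :
    ((V ×ˢ V).filter fun p => (p.1 ∆ p.2).card = 1).card ≤ 2 * vcDimFam V * V.card :=
  HLWaux.main Finset.univ V (fun A _ => Finset.subset_univ A) hV
end

section
/- Let f : {0,1}^n → {0,1} be a non-zero Boolean function. Then 2·VC(f) + s(f) ≥ n, where s(f) is the sensitivity of f. -/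
open Finset

open scoped symmDiff

/-- The sensitivity of `f` at `x`: the number of coordinates whose flip changes `f(x)`
(flipping coordinate `i` of the point `x : Finset (Fin n)` is `x ∆ {i}`). -/
def sensAt {n : ℕ} (f : Finset (Fin n) → Bool) (x : Finset (Fin n)) : ℕ :=
  (Finset.univ.filter fun i : Fin n => f (x ∆ {i}) ≠ f x).card

/-- The (maximum) sensitivity `s(f)`. -/
def sensitivity {n : ℕ} (f : Finset (Fin n) → Bool) : ℕ :=
  Finset.univ.sup fun x : Finset (Fin n) => sensAt f x

section Aux
variable {α : Type*} [DecidableEq α]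

lemma mem_sds {A : Finset α} {i x : α} :
    x ∈ A ∆ ({i} : Finset α) ↔ ((x ∈ A ∧ x ≠ i) ∨ (x = i ∧ x ∉ A)) := by
  simp [Finset.mem_symmDiff]

lemma sds_of_notMem {A : Finset α} {a : α} (h : a ∉ A) : A ∆ ({a} : Finset α) = insert a A := by
  ext x
  by_cases hx : x = a <;> simp [mem_sds, hx, h]

lemma sds_of_mem {A : Finset α} {a : α} (h : a ∈ A) : A ∆ ({a} : Finset α) = A.erase a := by
  ext x
  by_cases hx : x = a <;> simp [mem_sds, hx, h]

lemma notMem_sds {A : Finset α} {a i : α} (h : a ∉ A) (hia : i ≠ a) :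
    a ∉ A ∆ ({i} : Finset α) := by
  simp [mem_sds, h, hia.symm]

lemma insert_sds {A : Finset α} {a i : α} (h : a ∉ A) (hia : i ≠ a) :
    (insert a A) ∆ ({i} : Finset α) = insert a (A ∆ ({i} : Finset α)) := by
  ext x
  by_cases hx : x = a <;> by_cases hxi : x = i <;>
    simp [mem_sds, hx, hxi, h, hia, Ne.symm hia]

def hdeg (F : Finset (Finset α)) (S : Finset α) (A : Finset α) : ℕ :=
  (S.filter fun i => A ∆ ({i} : Finset α) ∈ F).card

lemma hlw (S : Finset α) : ∀ (F : Finset (Finset α)) (d : ℕ),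
    (∀ A ∈ F, A ⊆ S) → (∀ T, ShattersFam F T → T.card ≤ d) →
    ∑ A ∈ F, hdeg F S A ≤ 2 * d * F.card := by
  induction S using Finset.induction_on with
  | empty =>
      intro F d _ _
      have : ∀ A ∈ F, hdeg F ∅ A = 0 := by intro A _; simp [hdeg]
      rw [Finset.sum_congr rfl this]
      simp
  | @insert a S haS IH =>
      intro F d hsub hsh
      classical
      set F0 : Finset (Finset α) := F.filter (fun A => a ∉ A) with hF0
      set Fa : Finset (Finset α) := F.filter (fun A => a ∈ A) with hFa
      set F1 : Finset (Finset α) := Fa.image (fun A => A.erase a) with hF1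
      set G : Finset (Finset α) := F0 ∪ F1 with hG
      set H : Finset (Finset α) := F0 ∩ F1 with hH
      -- basic membership facts
      have hF0mem : ∀ {A}, A ∈ F0 ↔ (A ∈ F ∧ a ∉ A) := by intro A; simp [hF0]
      have hF1na : ∀ A ∈ F1, a ∉ A := by
        intro A hA
        rw [hF1] at hA
        obtain ⟨B, _, rfl⟩ := Finset.mem_image.mp hA
        exact Finset.notMem_erase a B
      have hkey : ∀ X : Finset α, a ∉ X → (insert a X ∈ F ↔ X ∈ F1) := by
        intro X hX
        constructor
        · intro h
          rw [hF1]
          refine Finset.mem_image.mpr ⟨insert a X, ?_, ?_⟩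
          · simp [hFa, h]
          · rw [Finset.erase_insert hX]
        · intro h
          rw [hF1] at h
          obtain ⟨B, hB, rfl⟩ := Finset.mem_image.mp h
          rw [hFa, Finset.mem_filter] at hB
          rw [Finset.insert_erase hB.2]
          exact hB.1
      -- subset facts
      have hsub0 : ∀ A ∈ F0, A ⊆ S := by
        intro A hA x hx
        rw [hF0mem] at hA
        rcases Finset.mem_insert.mp (hsub A hA.1 hx) with h | h
        · exact absurd (h ▸ hx) hA.2
        · exact h
      have hsub1 : ∀ A ∈ F1, A ⊆ S := by
        intro A hA x hx
        rw [hF1] at hA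
        obtain ⟨B, hB, rfl⟩ := Finset.mem_image.mp hA
        rw [hFa, Finset.mem_filter] at hB
        rcases Finset.mem_insert.mp (hsub B hB.1 (Finset.erase_subset a B hx)) with h | h
        · exact absurd h (Finset.ne_of_mem_erase hx)
        · exact h
      have hsubG : ∀ A ∈ G, A ⊆ S := by
        intro A hA
        rcases Finset.mem_union.mp hA with h | h
        · exact hsub0 A h
        · exact hsub1 A h
      -- degree decomposition for sets not containing a
      have hd0 : ∀ A ∈ F0, hdeg F (insert a S) A = (if A ∈ F1 then 1 else 0) + hdeg F0 S A := by
        intro A hA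
        have haA : a ∉ A := (hF0mem.mp hA).2
        have h1 : hdeg F (insert a S) A
            = (if A ∆ ({a} : Finset α) ∈ F then 1 else 0)
              + (S.filter fun i => A ∆ ({i} : Finset α) ∈ F).card := by
          rw [hdeg, Finset.filter_insert]
          by_cases h : A ∆ ({a} : Finset α) ∈ F
          · rw [if_pos h, if_pos h, Finset.card_insert_of_notMem (by
              intro hc; exact haS (Finset.mem_of_mem_filter a hc))]
            omega
          · rw [if_neg h, if_neg h]; omega
        rw [h1, sds_of_notMem haA]
        congr 1
        · by_cases h : A ∈ F1
          · rw [if_pos h, if_pos ((hkey A haA).mpr h)]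
          · rw [if_neg h, if_neg (fun hc => h ((hkey A haA).mp hc))]
        · rw [hdeg]
          congr 1
          apply Finset.filter_congr
          intro i hi
          have hia : i ≠ a := fun h => haS (h ▸ hi)
          have : a ∉ A ∆ ({i} : Finset α) := notMem_sds haA hia
          simp only [hF0mem, this, not_false_iff, and_true]
      -- degree decomposition for sets containing a
      have hd1 : ∀ A ∈ F1, hdeg F (insert a S) (insert a A)
          = (if A ∈ F0 then 1 else 0) + hdeg F1 S A := by
        intro A hA
        have haA : a ∉ A := hF1na A hA
        have h1 : hdeg F (insert a S) (insert a A)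
            = (if (insert a A) ∆ ({a} : Finset α) ∈ F then 1 else 0)
              + (S.filter fun i => (insert a A) ∆ ({i} : Finset α) ∈ F).card := by
          rw [hdeg, Finset.filter_insert]
          by_cases h : (insert a A) ∆ ({a} : Finset α) ∈ F
          · rw [if_pos h, if_pos h, Finset.card_insert_of_notMem (by
              intro hc; exact haS (Finset.mem_of_mem_filter a hc))]
            omega
          · rw [if_neg h, if_neg h]; omega
        rw [h1, sds_of_mem (Finset.mem_insert_self a A), Finset.erase_insert haA]
        congr 1
        · by_cases h : A ∈ F
          · rw [if_pos h, if_pos (hF0mem.mpr ⟨h, haA⟩)]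
          · rw [if_neg h, if_neg (fun hc => h (hF0mem.mp hc).1)]
        · rw [hdeg]
          congr 1
          apply Finset.filter_congr
          intro i hi
          have hia : i ≠ a := fun h => haS (h ▸ hi)
          rw [insert_sds haA hia, hkey _ (notMem_sds haA hia)]
      -- injectivity of erase on Fa
      have hinj : ∀ x ∈ Fa, ∀ y ∈ Fa, x.erase a = y.erase a → x = y := by
        intro x hx y hy hxy
        rw [hFa, Finset.mem_filter] at hx hy
        rw [← Finset.insert_erase hx.2, ← Finset.insert_erase hy.2, hxy]
      -- sum splitting
      have hFa' : F.filter (fun A => ¬ a ∉ A) = Fa := by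
        rw [hFa]; apply Finset.filter_congr; intro A _; simp
      have hsplit : ∑ A ∈ F, hdeg F (insert a S) A
          = ∑ A ∈ F0, hdeg F (insert a S) A + ∑ B ∈ Fa, hdeg F (insert a S) B := by
        rw [hF0, ← hFa', Finset.sum_filter_add_sum_filter_not]
      have hsumFa : ∑ A ∈ F1, hdeg F (insert a S) (insert a A)
          = ∑ B ∈ Fa, hdeg F (insert a S) B := by
        rw [hF1, Finset.sum_image hinj]
        apply Finset.sum_congr rfl
        intro B hB
        rw [hFa, Finset.mem_filter] at hB
        rw [Finset.insert_erase hB.2]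
      have e0 : ∑ A ∈ F0, hdeg F (insert a S) A = H.card + ∑ A ∈ F0, hdeg F0 S A := by
        rw [Finset.sum_congr rfl hd0, Finset.sum_add_distrib, Finset.sum_ite_mem]
        congr 1
        rw [Finset.sum_const, smul_eq_mul, mul_one, ← hH]
      have e1 : ∑ A ∈ F1, hdeg F (insert a S) (insert a A)
          = H.card + ∑ A ∈ F1, hdeg F1 S A := by
        rw [Finset.sum_congr rfl hd1, Finset.sum_add_distrib, Finset.sum_ite_mem]
        congr 1
        rw [Finset.sum_const, smul_eq_mul, mul_one, Finset.inter_comm, ← hH]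
      have htot : ∑ A ∈ F, hdeg F (insert a S) A
          = 2 * H.card + (∑ A ∈ F0, hdeg F0 S A + ∑ A ∈ F1, hdeg F1 S A) := by
        rw [hsplit, ← hsumFa, e0, e1]; ring
      -- middle inequality
      have hmid : ∑ A ∈ F0, hdeg F0 S A + ∑ A ∈ F1, hdeg F1 S A
          ≤ ∑ A ∈ G, hdeg G S A + ∑ A ∈ H, hdeg H S A := by
        have l0 : ∑ A ∈ F0, hdeg F0 S A = ∑ A ∈ G, (if A ∈ F0 then hdeg F0 S A else 0) := by
          rw [Finset.sum_ite_mem]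
          congr 1
          exact (Finset.inter_eq_right.mpr (by rw [hG]; exact Finset.subset_union_left)).symm
        have l1 : ∑ A ∈ F1, hdeg F1 S A = ∑ A ∈ G, (if A ∈ F1 then hdeg F1 S A else 0) := by
          rw [Finset.sum_ite_mem]
          congr 1
          exact (Finset.inter_eq_right.mpr (by rw [hG]; exact Finset.subset_union_right)).symm
        have lH : ∑ A ∈ H, hdeg H S A = ∑ A ∈ G, (if A ∈ H then hdeg H S A else 0) := by
          rw [Finset.sum_ite_mem]
          congr 1
          exact (Finset.inter_eq_right.mpr (by rw [hG, hH]; exact Finset.inter_subset_union)).symm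
        rw [l0, l1, lH, ← Finset.sum_add_distrib, ← Finset.sum_add_distrib]
        apply Finset.sum_le_sum
        intro A hAG
        have hdmono : ∀ (P Q : Finset (Finset α)), (∀ B ∈ P, B ∈ Q) → hdeg P S A ≤ hdeg Q S A := by
          intro P Q hPQ
          apply Finset.card_le_card
          intro i hi
          rw [Finset.mem_filter] at hi ⊢
          exact ⟨hi.1, hPQ _ hi.2⟩
        by_cases h0 : A ∈ F0 <;> by_cases h1 : A ∈ F1
        · have hAH : A ∈ H := by rw [hH]; exact Finset.mem_inter.mpr ⟨h0, h1⟩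
          rw [if_pos h0, if_pos h1, if_pos hAH]
          have heq : hdeg G S A + hdeg H S A = hdeg F0 S A + hdeg F1 S A := by
            rw [hdeg, hdeg, hdeg, hdeg]
            have hu : (S.filter fun i => A ∆ ({i} : Finset α) ∈ G)
                = (S.filter fun i => A ∆ ({i} : Finset α) ∈ F0)
                  ∪ (S.filter fun i => A ∆ ({i} : Finset α) ∈ F1) := by
              rw [← Finset.filter_or]
              apply Finset.filter_congr
              intro i _
              rw [hG]
              simp [Finset.mem_union]
            have hi : (S.filter fun i => A ∆ ({i} : Finset α) ∈ H)
                = (S.filter fun i => A ∆ ({i} : Finset α) ∈ F0)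
                  ∩ (S.filter fun i => A ∆ ({i} : Finset α) ∈ F1) := by
              rw [← Finset.filter_and]
              apply Finset.filter_congr
              intro i _
              rw [hH]
              simp [Finset.mem_inter]
            rw [hu, hi, Finset.card_union_add_card_inter]
          omega
        · have hAH : A ∉ H := by rw [hH]; simp [Finset.mem_inter, h1]
          rw [if_pos h0, if_neg h1, if_neg hAH]
          have := hdmono F0 G (fun B hB => by rw [hG]; exact Finset.mem_union_left _ hB)
          omega
        · have hAH : A ∉ H := by rw [hH]; simp [Finset.mem_inter, h0]
          rw [if_neg h0, if_pos h1, if_neg hAH]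
          have := hdmono F1 G (fun B hB => by rw [hG]; exact Finset.mem_union_right _ hB)
          omega
        · have hAH : A ∉ H := by rw [hH]; simp [Finset.mem_inter, h0]
          rw [if_neg h0, if_neg h1, if_neg hAH]
          simp
      -- a is not in any shattered set
      have hTsubS : ∀ (FF : Finset (Finset α)), (∀ A ∈ FF, A ⊆ S) →
          ∀ T, ShattersFam FF T → a ∉ T := by
        intro FF hFF T hT haT
        obtain ⟨A, hA, hAT⟩ := hT T (Finset.Subset.refl T)
        have hTA : T ⊆ A := by
          intro x hx
          have hx' : x ∈ A ∩ T := by rw [hAT]; exact hx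
          exact (Finset.mem_inter.mp hx').1
        exact haS (hFF A hA (hTA haT))
      have hsubH : ∀ A ∈ H, A ⊆ S := by
        intro A hA
        rw [hH] at hA
        exact hsub0 A (Finset.mem_inter.mp hA).1
      -- shattering bound for G
      have hshG' : ∀ T, ShattersFam G T → T.card ≤ d := by
        intro T hT
        have haT : a ∉ T := hTsubS G hsubG T hT
        apply hsh
        intro U hU
        obtain ⟨A, hAG, hAU⟩ := hT U hU
        rw [hG] at hAG
        rcases Finset.mem_union.mp hAG with h | h
        · exact ⟨A, (hF0mem.mp h).1, hAU⟩
        · rw [hF1] at h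
          obtain ⟨B, hB, rfl⟩ := Finset.mem_image.mp h
          rw [hFa, Finset.mem_filter] at hB
          refine ⟨B, hB.1, ?_⟩
          rw [← hAU]
          ext x
          simp only [Finset.mem_inter, Finset.mem_erase]
          constructor
          · rintro ⟨hxB, hxT⟩
            exact ⟨⟨fun hx => haT (hx ▸ hxT), hxB⟩, hxT⟩
          · rintro ⟨⟨_, hxB⟩, hxT⟩
            exact ⟨hxB, hxT⟩
      -- shattering bound for H
      have hshH' : ∀ T, ShattersFam H T → T.card + 1 ≤ d := by
        intro T hT
        have haT : a ∉ T := hTsubS H hsubH T hT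
        have hshat : ShattersFam F (insert a T) := by
          intro U hU
          by_cases haU : a ∈ U
          · have hU' : U.erase a ⊆ T := by
              intro x hx
              rcases Finset.mem_insert.mp (hU (Finset.erase_subset a U hx)) with h | h
              · exact absurd h (Finset.ne_of_mem_erase hx)
              · exact h
            obtain ⟨A, hAH, hAU⟩ := hT _ hU'
            rw [hH] at hAH
            have hA1 : A ∈ F1 := (Finset.mem_inter.mp hAH).2
            have haA : a ∉ A := hF1na A hA1
            refine ⟨insert a A, (hkey A haA).mpr hA1, ?_⟩
            ext x
            by_cases hx : x = a
            · subst hx; simp [haU]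
            · have hmem := Finset.ext_iff.mp hAU x
              simp only [Finset.mem_inter, Finset.mem_erase] at hmem
              simp only [Finset.mem_inter, Finset.mem_insert]
              constructor
              · rintro ⟨h1, h2⟩
                have hxA : x ∈ A := h1.resolve_left hx
                have hxT : x ∈ T := h2.resolve_left hx
                exact (hmem.mp ⟨hxA, hxT⟩).2
              · intro hxU
                have hthis := hmem.mpr ⟨hx, hxU⟩
                exact ⟨Or.inr hthis.1, Or.inr hthis.2⟩
          · have hUT : U ⊆ T := by
              intro x hx
              rcases Finset.mem_insert.mp (hU hx) with h | h
              · exact absurd (h ▸ hx) haU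
              · exact h
            obtain ⟨A, hAH, hAU⟩ := hT _ hUT
            rw [hH] at hAH
            have hA0 : A ∈ F0 := (Finset.mem_inter.mp hAH).1
            have haA : a ∉ A := (hF0mem.mp hA0).2
            refine ⟨A, (hF0mem.mp hA0).1, ?_⟩
            rw [Finset.inter_insert_of_notMem haA]
            exact hAU
        have := hsh _ hshat
        rwa [Finset.card_insert_of_notMem haT] at this
      have hHd : H.card = 0 ∨ 1 ≤ d := by
        by_cases hHe : H = ∅
        · left; rw [hHe]; rfl
        · right
          obtain ⟨A, hA⟩ := Finset.nonempty_iff_ne_empty.mpr hHe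
          have hsh0 : ShattersFam H ∅ := by
            intro U hU
            rw [Finset.subset_empty.mp hU]
            exact ⟨A, hA, Finset.inter_empty A⟩
          have := hshH' ∅ hsh0
          simpa using this
      -- induction hypotheses
      have hIHG := IH G d hsubG hshG'
      have hIHH := IH H (d - 1) hsubH (fun T hT => by have := hshH' T hT; omega)
      -- cardinalities
      have hc1 : F1.card = Fa.card := by
        rw [hF1]
        exact Finset.card_image_of_injOn
          (fun x hx y hy h => hinj x (Finset.mem_coe.mp hx) y (Finset.mem_coe.mp hy) h)
      have hc2 : Fa.card + F0.card = F.card := by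
        rw [hF0, hFa]
        exact Finset.card_filter_add_card_filter_not (p := fun A => a ∈ A)
      have hc3 : G.card + H.card = F0.card + F1.card := by
        rw [hG, hH]
        exact Finset.card_union_add_card_inter F0 F1
      have hFc : F.card = G.card + H.card := by omega
      have key : 2 * H.card + 2 * (d - 1) * H.card ≤ 2 * d * H.card := by
        rcases hHd with h | h
        · rw [h]; simp
        · have : 2 * (d - 1) * H.card + 2 * H.card = 2 * ((d - 1) + 1) * H.card := by ring
          rw [Nat.sub_add_cancel h] at this
          omega
      calc ∑ A ∈ F, hdeg F (insert a S) A
          = 2 * H.card + (∑ A ∈ F0, hdeg F0 S A + ∑ A ∈ F1, hdeg F1 S A) := htot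
        _ ≤ 2 * H.card + (∑ A ∈ G, hdeg G S A + ∑ A ∈ H, hdeg H S A) :=
            Nat.add_le_add_left hmid _
        _ ≤ 2 * H.card + (2 * d * G.card + 2 * (d - 1) * H.card) :=
            Nat.add_le_add_left (Nat.add_le_add hIHG hIHH) _
        _ = 2 * d * G.card + (2 * H.card + 2 * (d - 1) * H.card) := by ring
        _ ≤ 2 * d * G.card + 2 * d * H.card := Nat.add_le_add_left key _
        _ = 2 * d * (G.card + H.card) := by ring
        _ = 2 * d * F.card := by rw [← hFc]

end Aux

/-- For non-zero `f : {0,1}^n → {0,1}`, `2·VC(f) + s(f) ≥ n`. -/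
theorem stmt17 (n : ℕ) (f : Finset (Fin n) → Bool) (hf : ∃ x, f x = true) :
    n ≤ 2 * vcDimFam (Finset.univ.filter fun A => f A = true) + sensitivity f := by
  classical
  obtain ⟨x0, hx0⟩ := hf
  set F : Finset (Finset (Fin n)) := Finset.univ.filter (fun A => f A = true) with hF
  set d := vcDimFam F with hd
  have hbdd : ∀ T : Finset (Fin n), ShattersFam F T → T.card ≤ d := by
    intro T hT
    apply le_csSup
    · refine ⟨n, ?_⟩
      rintro m ⟨T', hT'card, _⟩
      rw [← hT'card]
      calc T'.card ≤ (Finset.univ : Finset (Fin n)).card := Finset.card_le_univ T'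
        _ = n := by simp
    · exact ⟨T, rfl, hT⟩
  have hsum := hlw Finset.univ F d (fun A _ => Finset.subset_univ A) hbdd
  have hdegge : ∀ x ∈ F, n ≤ hdeg F Finset.univ x + sensitivity f := by
    intro x hx
    have hfx : f x = true := (Finset.mem_filter.mp hx).2
    have hfilter : (Finset.univ.filter fun i : Fin n => x ∆ ({i} : Finset (Fin n)) ∈ F)
        = Finset.univ.filter fun i : Fin n => ¬ (f (x ∆ {i}) ≠ f x) := by
      apply Finset.filter_congr
      intro i _
      rw [hF]
      simp [hfx]
    have h1 := Finset.card_filter_add_card_filter_not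
      (s := (Finset.univ : Finset (Fin n))) (p := fun i => f (x ∆ {i}) ≠ f x)
    simp only [Finset.card_univ, Fintype.card_fin] at h1
    have hn : hdeg F Finset.univ x + sensAt f x = n := by
      rw [hdeg, hfilter, sensAt]
      omega
    have hle : sensAt f x ≤ sensitivity f :=
      Finset.le_sup (f := fun y => sensAt f y) (Finset.mem_univ x)
    omega
  have hcard : 0 < F.card :=
    Finset.card_pos.mpr ⟨x0, Finset.mem_filter.mpr ⟨Finset.mem_univ _, hx0⟩⟩
  have hmain : F.card * n ≤ F.card * (2 * d + sensitivity f) := by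
    calc F.card * n = ∑ _x ∈ F, n := by rw [Finset.sum_const, smul_eq_mul, mul_comm]
      _ ≤ ∑ x ∈ F, (hdeg F Finset.univ x + sensitivity f) := Finset.sum_le_sum hdegge
      _ = ∑ x ∈ F, hdeg F Finset.univ x + F.card * sensitivity f := by
          rw [Finset.sum_add_distrib, Finset.sum_const, smul_eq_mul]
      _ ≤ 2 * d * F.card + F.card * sensitivity f := Nat.add_le_add_right hsum _
      _ = F.card * (2 * d + sensitivity f) := by ring
  exact Nat.le_of_mul_le_mul_left hmain hcard
end

section
/- Let F ⊆ 2^X be a non-empty family over a finite set X, and let d ≥ 0. If for every A ⊆ X with |A| ≤ d the count #{F ∈ F : F ∩ A = ∅} is even, then for every S ⊆ X with |S| ≤ d and every T ⊆ S the count #{F ∈ F : F ∩ S = T} is even. -/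
open Finset


/-- If every `A ⊆ X` with `|A| ≤ d` is disjoint from an even number of
members of the non-empty family `F`, then for every `S` with `|S| ≤ d` and every `T ⊆ S`,
an even number of members of `F` have trace `T` on `S`. -/
theorem stmt19 {X : Type*} [Fintype X] [DecidableEq X] (F : Finset (Finset X))
    (hF : F.Nonempty) (d : ℕ)
    (h : ∀ A : Finset X, A.card ≤ d → Even (F.filter fun G => G ∩ A = ∅).card) :
    ∀ S : Finset X, S.card ≤ d → ∀ T ⊆ S, Even (F.filter fun G => G ∩ S = T).card := by
  intro S hS
  -- a_U version: number of G with G ∩ S ⊆ T is even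
  have key : ∀ T ⊆ S, Even (F.filter fun G => G ∩ S ⊆ T).card := by
    intro T hT
    have hcard : (S \ T).card ≤ d := le_trans (card_le_card (sdiff_subset)) hS
    have := h (S \ T) hcard
    have heq : (F.filter fun G => G ∩ (S \ T) = ∅) = F.filter fun G => G ∩ S ⊆ T := by
      apply filter_congr
      intro G _
      constructor
      · intro he x hx
        rcases mem_inter.mp hx with ⟨hxG, hxS⟩
        by_contra hxT
        have : x ∈ G ∩ (S \ T) := by
          simp [mem_inter, mem_sdiff, hxG, hxS, hxT]
        simp [he] at this
      · intro hsub
        ext x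
        simp only [mem_inter, mem_sdiff, notMem_empty, iff_false]
        rintro ⟨hxG, hxS, hxT⟩
        exact hxT (hsub (mem_inter.mpr ⟨hxG, hxS⟩))
    rwa [heq] at this
  -- decomposition
  have decomp : ∀ T ⊆ S, (F.filter fun G => G ∩ S ⊆ T).card
      = ∑ T' ∈ T.powerset, (F.filter fun G => G ∩ S = T').card := by
    intro T hT
    rw [Finset.card_eq_sum_card_fiberwise (f := fun G => G ∩ S) (t := T.powerset)
      (by intro G hG; simp only [mem_coe, mem_filter] at hG; exact mem_powerset.mpr hG.2)]
    apply Finset.sum_congr rfl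
    intro T' hT'
    rw [filter_filter]
    congr 1
    apply Finset.filter_congr
    intro G _
    constructor
    · rintro ⟨_, hGT'⟩; exact hGT'
    · intro hGT'
      exact ⟨hGT' ▸ (mem_powerset.mp hT'), hGT'⟩
  -- strong induction on card T
  intro T hT
  obtain ⟨n, hn⟩ : ∃ n, T.card = n := ⟨_, rfl⟩
  induction n using Nat.strong_induction_on generalizing T with
  | _ n ih =>
    have hsum := key T hT
    rw [decomp T hT] at hsum
    have hmem : T ∈ T.powerset := mem_powerset.mpr (le_refl T)
    rw [← Finset.add_sum_erase _ _ hmem] at hsum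
    have hrest : Even (∑ T' ∈ (T.powerset.erase T), (F.filter fun G => G ∩ S = T').card) := by
      apply Finset.even_sum
      intro T' hT'
      have hT'mem := mem_powerset.mp (mem_of_mem_erase hT')
      have hne := ne_of_mem_erase hT'
      have hlt : T'.card < T.card :=
        card_lt_card (lt_of_le_of_ne hT'mem hne)
      exact ih T'.card (hn ▸ hlt) T' (hT'mem.trans hT) rfl
    rcases Nat.even_add.mp hsum with h1
    exact h1.mpr hrest
end
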